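/- arXiv:1605.07997 — 11 statements merged into one kernel-verified Lean document; each statement's English description precedes it below -/
import Mathlib

section
/- For any triangle abc with angle ∠bac = φ, the ratio |bc| / (|ab| + |ac|) is at least sin(φ/2). -/
/-!
By the law of cosines and `cos φ = 1 - 2 sin² (φ/2)`,
`|bc|² = (|ab| - |ac|)² + 4 |ab| |ac| sin² (φ/2)`, while
`((|ab| + |ac|) sin (φ/2))² = (|ab| - |ac|)² sin² (φ/2) + 4 |ab| |ac| sin² (φ/2)`;
the first is larger because `sin² (φ/2) ≤ 1`.
-/

open EuclideanGeometry

namespace EuclideanGeometry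

variable {V P : Type*} [NormedAddCommGroup V] [InnerProductSpace ℝ V] [MetricSpace P]
  [NormedAddTorsor V P]

theorem sin_half_angle_mul_add_dist_le_dist (a b c : P) :
    Real.sin (∠ b a c / 2) * (dist a b + dist a c) ≤ dist b c := by
  set s := Real.sin (∠ b a c / 2)
  have hcos : Real.cos (∠ b a c) = 1 - 2 * s ^ 2 := by
    rw [← mul_div_cancel₀ (∠ b a c) two_ne_zero, Real.cos_two_mul', Real.cos_sq']
    ring
  have hlaw := law_cos b a c
  rw [hcos, dist_comm b a, dist_comm c a] at hlaw
  have hs₁ : s ^ 2 ≤ 1 := Real.sin_sq_le_one _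
  refine le_of_sq_le_sq ?_ dist_nonneg
  nlinarith [mul_nonneg (sq_nonneg (dist a b - dist a c)) (sub_nonneg.2 hs₁)]

end EuclideanGeometry

/-- For any (nondegenerate) triangle `a b c` with angle `φ = ∠ b a c` at vertex `a`,
the ratio `|bc| / (|ab| + |ac|)` is at least `sin (φ/2)`. -/
theorem stmt0 (a b c : EuclideanSpace ℝ (Fin 2))
    (hnd : AffineIndependent ℝ ![a, b, c]) (φ : ℝ) (hφ : φ = ∠ b a c) :
    dist b c / (dist a b + dist a c) ≥ Real.sin (φ / 2) := by
  have hab : a ≠ b := by simpa using hnd.injective.ne (show (0 : Fin 3) ≠ 1 by decide)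
  have hpos : 0 < dist a b + dist a c := add_pos_of_pos_of_nonneg (dist_pos.2 hab) dist_nonneg
  rw [ge_iff_le, le_div_iff₀ hpos, hφ]
  exact sin_half_angle_mul_add_dist_le_dist a b c
end

section
/- For every n ≥ 2, there exists a compact convex set K in the plane with nonempty interior such that any n extreme points of K can be connected by a polygonal path of total length strictly less than half the perimeter of K. -/
/-!
Take for `K` the convex hull of the points `(j, √j)`, `0 ≤ j ≤ m`. Its boundary contains the `m`
edges of this concave chain and the chord from `(0, 0)` to `(m, √m)`, which meet only at vertices.
The chord has length at least `m` and the `i`-th edge has length at least `1 + 1/(12(i+1))`, so the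
perimeter is at least `2m + H_m/12`, where `H_m ≥ log m` is the harmonic number. The extreme points
of `K` are among the vertices, and visiting `n` of them from left to right costs at most `1` more
than the horizontal displacement per step, hence at most `m + n` in total. Taking
`m = 2^(48n+2)` makes this less than half the perimeter.
-/

open Set MeasureTheory
open scoped RealInnerProductSpace

local notation "ℝ²" => EuclideanSpace ℝ (Fin 2)

noncomputable def pathLength {X : Type*} [PseudoMetricSpace X] {n : ℕ} (q : Fin n → X) : ℝ :=
  ∑ i : Fin n, if h : (i : ℕ) + 1 < n then dist (q i) (q ⟨i + 1, h⟩) else 0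

theorem Fin.sum_succ_sub_castSucc {M : Type*} [AddCommGroup M] {k : ℕ} (g : Fin (k + 1) → M) :
    ∑ i : Fin k, (g i.succ - g i.castSucc) = g (Fin.last k) - g 0 := by
  rw [Finset.sum_sub_distrib, eq_sub_of_add_eq' (Fin.sum_univ_succ g).symm,
    eq_sub_of_add_eq (Fin.sum_univ_castSucc g).symm]
  abel

section PathLength

variable {X : Type*} [PseudoMetricSpace X]

theorem pathLength_succ {k : ℕ} (q : Fin (k + 1) → X) :
    pathLength q = ∑ i : Fin k, dist (q i.castSucc) (q i.succ) := by
  simp [pathLength, Fin.sum_univ_castSucc, Fin.succ]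

theorem pathLength_le_of_dist_le {k : ℕ} (q : Fin (k + 1) → X) (g : Fin (k + 1) → ℝ) (c : ℝ)
    (h : ∀ i : Fin k, dist (q i.castSucc) (q i.succ) ≤ g i.succ - g i.castSucc + c) :
    pathLength q ≤ g (Fin.last k) - g 0 + k * c := by
  calc pathLength q = ∑ i : Fin k, dist (q i.castSucc) (q i.succ) := pathLength_succ q
    _ ≤ ∑ i : Fin k, (g i.succ - g i.castSucc + c) := Finset.sum_le_sum fun i _ => h i
    _ = g (Fin.last k) - g 0 + k * c := by
      rw [Finset.sum_add_distrib, Fin.sum_succ_sub_castSucc]; simp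

end PathLength

section Concave

variable {𝕜 : Type*} [Field 𝕜] [LinearOrder 𝕜] [IsStrictOrderedRing 𝕜] {s : Set 𝕜} {f : 𝕜 → 𝕜}
  {x y z : 𝕜}

theorem ConcaveOn.secant_le (hf : ConcaveOn 𝕜 s f) (hx : x ∈ s) (hy : y ∈ s) (hxz : x ≤ z)
    (hzy : z ≤ y) : (y - z) * f x + (z - x) * f y ≤ (y - x) * f z := by
  rcases hxz.eq_or_lt with rfl | hxz
  · simp
  rcases hzy.eq_or_lt with rfl | hzy
  · simp
  have := hf.neg.secant_mono_aux1 hx hy hxz hzy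
  simp only [Pi.neg_apply] at this
  linarith

theorem StrictConcaveOn.secant_lt (hf : StrictConcaveOn 𝕜 s f) (hx : x ∈ s) (hy : y ∈ s)
    (hxz : x < z) (hzy : z < y) : (y - z) * f x + (z - x) * f y < (y - x) * f z := by
  have := hf.neg.secant_strict_mono_aux1 hx hy hxz hzy
  simp only [Pi.neg_apply] at this
  linarith

theorem ConcaveOn.le_secant_of_le_or_le (hf : ConcaveOn 𝕜 s f) (hx : x ∈ s) (hy : y ∈ s)
    (hz : z ∈ s) (hxy : x ≤ y) (hzxy : z ≤ x ∨ y ≤ z) :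
    (y - x) * f z ≤ (y - z) * f x + (z - x) * f y := by
  rcases hzxy with hzx | hyz
  · linarith [hf.secant_le hz hy hzx hxy]
  · linarith [hf.secant_le hx hz hxy hyz]

end Concave

theorem measurableSet_segment {E : Type*} [NormedAddCommGroup E] [NormedSpace ℝ E]
    [MeasurableSpace E] [BorelSpace E] (u v : E) : MeasurableSet (segment ℝ u v) := by
  rw [← convexHull_pair]
  exact ((toFinite {u, v}).isCompact_convexHull ℝ).isClosed.measurableSet

section HalfSpace

variable {E : Type*} [NormedAddCommGroup E] [InnerProductSpace ℝ E]

theorem isLinearMap_inner (w : E) : IsLinearMap ℝ (fun x => ⟪w, x⟫) :=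
  ⟨inner_add_right w, fun c x => real_inner_smul_right w x c⟩

theorem segment_subset_frontier_of_inner_le {K : Set E} (hK : Convex ℝ K) {w : E} (hw : w ≠ 0)
    {c : ℝ} (hKc : ∀ x ∈ K, ⟪w, x⟫ ≤ c) {u v : E} (hu : u ∈ K) (hv : v ∈ K) (huc : ⟪w, u⟫ = c)
    (hvc : ⟪w, v⟫ = c) : segment ℝ u v ⊆ frontier K := by
  intro q hq
  refine ⟨subset_closure (hK.segment_subset hu hv hq), fun hqK => ?_⟩
  have hqc : ⟪w, q⟫ = c := (convex_hyperplane (isLinearMap_inner w) c).segment_subset huc hvc hq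
  have hopen : IsOpenMap (innerSL ℝ w) :=
    (innerSL ℝ w).isOpenMap_of_ne_zero fun h => hw (by simpa using congrArg (· w) h)
  have := hopen.interior_preimage_subset_preimage_interior (s := Iic c) (interior_mono hKc hqK)
  rw [interior_Iic, mem_preimage, innerSL_apply_apply, mem_Iio] at this
  exact this.ne hqc

theorem eq_or_eq_of_mem_segment_of_le_inner {u v q w : E} {c : ℝ} (hq : q ∈ segment ℝ u v)
    (hu : ⟪w, u⟫ ≤ c) (hv : ⟪w, v⟫ ≤ c) (huv : ⟪w, u⟫ < c ∨ ⟪w, v⟫ < c) (hqc : c ≤ ⟪w, q⟫) :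
    q = u ∨ q = v := by
  rw [segment_eq_image] at hq
  obtain ⟨θ, ⟨hθ₀, hθ₁⟩, rfl⟩ := hq
  simp only [inner_add_right, real_inner_smul_right] at hqc
  rcases hθ₀.eq_or_lt with rfl | hθ₀
  · simp
  rcases hθ₁.eq_or_lt with rfl | hθ₁
  · simp
  rcases huv with h | h <;> nlinarith

end HalfSpace

section GraphPolygon

variable (f : ℝ → ℝ)

noncomputable def graphVertex (j : ℕ) : ℝ² := !₂[(j : ℝ), f j]

noncomputable def graphPolygon (m : ℕ) : Set ℝ² := convexHull ℝ (graphVertex f '' Iic m)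

noncomputable def graphEdge (i : ℕ) : Set ℝ² := segment ℝ (graphVertex f i) (graphVertex f (i + 1))

noncomputable def graphChord (m : ℕ) : Set ℝ² := segment ℝ (graphVertex f 0) (graphVertex f m)

variable {f} {m : ℕ}

theorem inner_graphVertex (a b : ℝ) (j : ℕ) : ⟪!₂[a, b], graphVertex f j⟫ = a * j + b * f j := by
  simp only [graphVertex, PiLp.inner_apply, RCLike.inner_apply, Real.ringHom_apply,
    Fin.sum_univ_two, Matrix.cons_val_zero, Matrix.cons_val_one, Matrix.cons_val_fin_one]
  ring

theorem dist_graphVertex (i j : ℕ) :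
    dist (graphVertex f i) (graphVertex f j) = √((i - j) ^ 2 + (f i - f j) ^ 2) := by
  simp [graphVertex, EuclideanSpace.dist_eq, Fin.sum_univ_two, Real.dist_eq, sq_abs]

theorem graphVertex_mem_graphPolygon {j : ℕ} (hj : j ≤ m) : graphVertex f j ∈ graphPolygon f m :=
  subset_convexHull ℝ _ ⟨j, hj, rfl⟩

theorem inner_le_of_mem_graphPolygon {w : ℝ²} {c : ℝ} (h : ∀ j ≤ m, ⟪w, graphVertex f j⟫ ≤ c) :
    ∀ x ∈ graphPolygon f m, ⟪w, x⟫ ≤ c :=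
  convexHull_min (image_subset_iff.2 h) (convex_halfSpace_le (isLinearMap_inner w) c)

theorem graphEdge_subset_frontier (hf : ConcaveOn ℝ (Ici 0) f) {i : ℕ} (hi : i < m) :
    graphEdge f i ⊆ frontier (graphPolygon f m) := by
  set s := f (i + 1) - f i
  refine segment_subset_frontier_of_inner_le (convex_convexHull ℝ _) (w := !₂[-s, 1]) (by simp)
    (c := f i - s * i) (inner_le_of_mem_graphPolygon fun j _ => ?_)
    (graphVertex_mem_graphPolygon hi.le) (graphVertex_mem_graphPolygon hi)
    (by rw [inner_graphVertex]; ring) (by rw [inner_graphVertex]; push_cast; ring)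
  have := hf.le_secant_of_le_or_le (x := (i : ℝ)) (y := i + 1) (z := (j : ℝ))
    (mem_Ici.2 (Nat.cast_nonneg _)) (mem_Ici.2 (by positivity)) (mem_Ici.2 (Nat.cast_nonneg _))
    (by linarith) ((le_or_gt j i).imp (by exact_mod_cast ·) (by exact_mod_cast ·))
  rw [inner_graphVertex]
  linarith

theorem inner_graphVertex_le_chord (hf : ConcaveOn ℝ (Ici 0) f) {j : ℕ} (hj : j ≤ m) :
    ⟪!₂[f m - f 0, -m], graphVertex f j⟫ ≤ -m * f 0 := by
  have := hf.secant_le (x := 0) (y := (m : ℝ)) (z := (j : ℝ)) (mem_Ici.2 le_rfl)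
    (mem_Ici.2 (Nat.cast_nonneg _)) (Nat.cast_nonneg _) (by exact_mod_cast hj)
  rw [inner_graphVertex]
  simp only [sub_zero] at this
  linarith

theorem inner_graphVertex_lt_chord (hf : StrictConcaveOn ℝ (Ici 0) f) {j : ℕ} (hj : 0 < j)
    (hjm : j < m) : ⟪!₂[f m - f 0, -m], graphVertex f j⟫ < -m * f 0 := by
  have := hf.secant_lt (x := 0) (y := (m : ℝ)) (z := (j : ℝ)) (mem_Ici.2 le_rfl)
    (mem_Ici.2 (Nat.cast_nonneg _)) (by exact_mod_cast hj) (by exact_mod_cast hjm)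
  rw [inner_graphVertex]
  simp only [sub_zero] at this
  linarith

theorem inner_graphVertex_zero_chord : ⟪!₂[f m - f 0, -m], graphVertex f 0⟫ = -m * f 0 := by
  rw [inner_graphVertex]; simp

theorem inner_graphVertex_chord : ⟪!₂[f m - f 0, -m], graphVertex f m⟫ = -m * f 0 := by
  rw [inner_graphVertex]; ring

theorem graphChord_subset_frontier (hf : ConcaveOn ℝ (Ici 0) f) (hm : 0 < m) :
    graphChord f m ⊆ frontier (graphPolygon f m) :=
  segment_subset_frontier_of_inner_le (convex_convexHull ℝ _) (by simp [hm.ne'])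
    (inner_le_of_mem_graphPolygon fun _ => inner_graphVertex_le_chord hf)
    (graphVertex_mem_graphPolygon (Nat.zero_le m)) (graphVertex_mem_graphPolygon le_rfl)
    inner_graphVertex_zero_chord inner_graphVertex_chord

theorem inner_graphVertex_fst (j : ℕ) : ⟪!₂[1, 0], graphVertex f j⟫ = j := by
  rw [inner_graphVertex]; ring

theorem graphEdge_inter_graphEdge_subset {i j : ℕ} (hij : i < j) :
    graphEdge f i ∩ graphEdge f j ⊆ range (graphVertex f) := by
  rintro q ⟨hqi, hqj⟩
  have hij' : (i : ℝ) + 1 ≤ j := by exact_mod_cast hij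
  have hj : (j : ℝ) ≤ ⟪!₂[1, 0], q⟫ :=
    (convex_halfSpace_ge (isLinearMap_inner _) _).segment_subset (inner_graphVertex_fst j).ge
      (show (j : ℝ) ≤ ⟪_, _⟫ by rw [inner_graphVertex_fst]; push_cast; linarith) hqj
  rcases eq_or_eq_of_mem_segment_of_le_inner hqi (by rw [inner_graphVertex_fst]; linarith)
    (by rw [inner_graphVertex_fst]; push_cast; linarith)
    (Or.inl (by rw [inner_graphVertex_fst]; linarith)) hj with rfl | rfl
  all_goals exact mem_range_self _

theorem graphEdge_inter_graphChord_subset (hf : StrictConcaveOn ℝ (Ici 0) f) (hm : 2 ≤ m) {i : ℕ}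
    (hi : i < m) : graphEdge f i ∩ graphChord f m ⊆ range (graphVertex f) := by
  rintro q ⟨hqi, hqm⟩
  have hq : -m * f 0 ≤ ⟪!₂[f m - f 0, -m], q⟫ :=
    (convex_halfSpace_ge (isLinearMap_inner _) _).segment_subset
      inner_graphVertex_zero_chord.ge inner_graphVertex_chord.ge hqm
  have hstrict : ⟪!₂[f m - f 0, -m], graphVertex f i⟫ < -m * f 0 ∨
      ⟪!₂[f m - f 0, -m], graphVertex f (i + 1)⟫ < -m * f 0 := by
    rcases Nat.eq_zero_or_pos i with rfl | hi0
    · exact Or.inr (inner_graphVertex_lt_chord hf one_pos hm)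
    · exact Or.inl (inner_graphVertex_lt_chord hf hi0 hi)
  rcases eq_or_eq_of_mem_segment_of_le_inner hqi (inner_graphVertex_le_chord hf.concaveOn hi.le)
    (inner_graphVertex_le_chord hf.concaveOn hi) hstrict hq with rfl | rfl
  all_goals exact mem_range_self _

instance : NullSingletonClass (μH[1] : Measure ℝ²) :=
  Measure.nullSingletonClass_hausdorff ℝ² one_pos

theorem hausdorffMeasure_biUnion_graphEdge (m : ℕ) :
    μH[1] (⋃ i ∈ Finset.range m, graphEdge f i) =
      ∑ i ∈ Finset.range m, ENNReal.ofReal (dist (graphVertex f i) (graphVertex f (i + 1))) := by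
  have hV : (range (graphVertex f)).Countable := countable_range _
  rw [measure_biUnion_finset₀ (f := graphEdge f) ?_
    fun i _ => (measurableSet_segment _ _).nullMeasurableSet]
  · simp [graphEdge, edist_dist]
  · intro i _ j _ hij
    rcases hij.lt_or_gt with h | h
    · exact (hV.mono (graphEdge_inter_graphEdge_subset h)).measure_zero _
    · exact (hV.mono (inter_comm _ _ ▸ graphEdge_inter_graphEdge_subset h)).measure_zero _

theorem ofReal_le_hausdorffMeasure_frontier_graphPolygon (hf : StrictConcaveOn ℝ (Ici 0) f)
    (hm : 2 ≤ m) :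
    ENNReal.ofReal (∑ i ∈ Finset.range m, dist (graphVertex f i) (graphVertex f (i + 1)) +
      dist (graphVertex f 0) (graphVertex f m)) ≤ μH[1] (frontier (graphPolygon f m)) := by
  have hdisj : AEDisjoint μH[1] (⋃ i ∈ Finset.range m, graphEdge f i) (graphChord f m) := by
    refine ((countable_range (graphVertex f)).mono ?_).measure_zero _
    rw [iUnion₂_inter]
    exact iUnion₂_subset fun i hi =>
      graphEdge_inter_graphChord_subset hf hm (Finset.mem_range.1 hi)
  calc _ = μH[1] ((⋃ i ∈ Finset.range m, graphEdge f i) ∪ graphChord f m) := by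
        rw [measure_union₀ (t := graphChord f m) (measurableSet_segment _ _).nullMeasurableSet
          hdisj, hausdorffMeasure_biUnion_graphEdge,
          ENNReal.ofReal_add (Finset.sum_nonneg fun _ _ => dist_nonneg) dist_nonneg,
          ENNReal.ofReal_sum_of_nonneg fun _ _ => dist_nonneg]
        simp [graphChord, edist_dist]
    _ ≤ μH[1] (frontier (graphPolygon f m)) :=
      measure_mono (union_subset
        (iUnion₂_subset fun i hi => graphEdge_subset_frontier hf.concaveOn (Finset.mem_range.1 hi))
        (graphChord_subset_frontier hf.concaveOn (by omega)))

theorem interior_graphPolygon_nonempty (hf : StrictConcaveOn ℝ (Ici 0) f) (hm : 2 ≤ m) :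
    (interior (graphPolygon f m)).Nonempty := by
  have hv : ∀ j ≤ m, graphVertex f j ∈ graphVertex f '' Iic m := fun j hj => ⟨j, hj, rfl⟩
  have hli : LinearIndependent ℝ
      ![graphVertex f 1 - graphVertex f 0, graphVertex f 2 - graphVertex f 0] := by
    rw [LinearIndependent.pair_iff]
    intro s t hst
    have h0 := congrArg (· 0) hst
    have h1 := congrArg (· 1) hst
    simp only [Fin.isValue, graphVertex, Nat.cast_one, CharP.cast_eq_zero, Nat.cast_ofNat,
      PiLp.add_apply, PiLp.smul_apply, PiLp.sub_apply, Matrix.cons_val_zero, sub_zero, smul_eq_mul,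
      mul_one, PiLp.zero_apply, Matrix.cons_val_one, Matrix.cons_val_fin_one] at h0 h1
    -- strict concavity at `1` makes the determinant `f 2 + f 0 - 2 * f 1` nonzero
    have hconc := hf.secant_lt (x := 0) (y := 2) (z := 1) (mem_Ici.2 le_rfl)
      (mem_Ici.2 zero_le_two) one_pos one_lt_two
    have ht : t * (f 2 + f 0 - 2 * f 1) = 0 := by linear_combination h1 - (f 1 - f 0) * h0
    have ht0 : t = 0 := (mul_eq_zero.1 ht).resolve_right (by norm_num at hconc; linarith)
    exact ⟨by linarith, ht0⟩
  rw [graphPolygon, interior_convexHull_nonempty_iff_affineSpan_eq_top,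
    AffineSubspace.affineSpan_eq_top_iff_vectorSpan_eq_top_of_nonempty ℝ _ _
      ⟨_, hv 0 (Nat.zero_le m)⟩, eq_top_iff, ← hli.span_eq_top_of_card_eq_finrank (by simp),
    Submodule.span_le, range_subset_iff]
  intro k
  fin_cases k
  · exact vsub_mem_vectorSpan ℝ (hv 1 (by omega)) (hv 0 (Nat.zero_le m))
  · exact vsub_mem_vectorSpan ℝ (hv 2 hm) (hv 0 (Nat.zero_le m))

end GraphPolygon

theorem dist_graphVertex_sqrt_le {a b : ℕ} (hab : a ≤ b) :
    dist (graphVertex (√·) a) (graphVertex (√·) b) ≤ (b - a : ℝ) + 1 := by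
  have hab' : (a : ℝ) ≤ b := by exact_mod_cast hab
  rw [dist_graphVertex, Real.sqrt_le_left (by linarith)]
  have hsa := Real.sq_sqrt (Nat.cast_nonneg a : (0 : ℝ) ≤ a)
  have hsb := Real.sq_sqrt (Nat.cast_nonneg b : (0 : ℝ) ≤ b)
  -- `(√b - √a) ^ 2 ≤ b - a` because `√a * √a ≤ √a * √b`
  have := mul_le_mul_of_nonneg_left (Real.sqrt_le_sqrt hab') (Real.sqrt_nonneg (a : ℝ))
  nlinarith

theorem one_add_le_dist_graphVertex_sqrt_succ (i : ℕ) :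
    1 + 1 / (12 * (i + 1)) ≤ dist (graphVertex (√·) i) (graphVertex (√·) (i + 1)) := by
  rw [dist_graphVertex]
  push_cast
  set r := √(i : ℝ)
  set s := √((i : ℝ) + 1)
  have hr2 : r ^ 2 = i := Real.sq_sqrt (Nat.cast_nonneg i)
  have hs2 : s ^ 2 = i + 1 := Real.sq_sqrt (by positivity)
  have hr : 0 ≤ r := Real.sqrt_nonneg _
  have hrs : r ≤ s := Real.sqrt_le_sqrt (by linarith)
  have hu1 : (r - s) ^ 2 ≤ 1 := by nlinarith
  -- `(s - r) * (s + r) = 1` and `s + r ≤ 2 * s`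
  have hu0 : 1 ≤ 4 * (i + 1) * (r - s) ^ 2 := by nlinarith
  have hv : 1 / (12 * ((i : ℝ) + 1)) ≤ (r - s) ^ 2 / 3 := by
    rw [div_le_div_iff₀ (by positivity) (by norm_num)]; linarith
  rw [Real.le_sqrt (by positivity) (by positivity)]
  calc (1 + 1 / (12 * ((i : ℝ) + 1))) ^ 2 ≤ (1 + (r - s) ^ 2 / 3) ^ 2 := by gcongr
    _ ≤ ((i : ℝ) - (i + 1)) ^ 2 + (r - s) ^ 2 := by nlinarith

theorem natCast_le_dist_graphVertex_sqrt (m : ℕ) :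
    (m : ℝ) ≤ dist (graphVertex (√·) 0) (graphVertex (√·) m) := by
  rw [dist_graphVertex, Real.le_sqrt (Nat.cast_nonneg _) (by positivity)]
  simp

theorem add_harmonic_div_le_sum_dist_graphVertex_sqrt (m : ℕ) :
    m + (harmonic m : ℝ) / 12 ≤
      ∑ i ∈ Finset.range m, dist (graphVertex (√·) i) (graphVertex (√·) (i + 1)) := by
  calc (m : ℝ) + (harmonic m : ℝ) / 12 = ∑ i ∈ Finset.range m, (1 + 1 / (12 * (i + 1) : ℝ)) := by
        rw [Finset.sum_add_distrib, harmonic]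
        push_cast
        rw [Finset.sum_div]
        simp [div_eq_mul_inv]
    _ ≤ _ := Finset.sum_le_sum fun i _ => one_add_le_dist_graphVertex_sqrt_succ i

theorem exists_perm_pathLength_le {n m : ℕ} (p : Fin n → ℝ²)
    (hp : ∀ i, p i ∈ graphVertex (√·) '' Iic m) :
    ∃ σ : Equiv.Perm (Fin n), pathLength (p ∘ σ) ≤ m + n := by
  choose j hjm hj using hp
  set σ := Tuple.sort j
  refine ⟨σ, ?_⟩
  cases n with
  | zero => simp [pathLength]
  | succ k =>
    have hmono : Monotone (j ∘ σ) := Tuple.monotone_sort j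
    have hstep (i : Fin k) : dist ((p ∘ σ) i.castSucc) ((p ∘ σ) i.succ) ≤
        (j (σ i.succ) : ℝ) - j (σ i.castSucc) + 1 := by
      simp only [Function.comp, ← hj]
      exact dist_graphVertex_sqrt_le (hmono Fin.castSucc_lt_succ.le)
    have hlast : (j (σ (Fin.last k)) : ℝ) ≤ m := by exact_mod_cast hjm _
    calc pathLength (p ∘ σ) ≤ (j (σ (Fin.last k)) : ℝ) - j (σ 0) + k * 1 :=
          pathLength_le_of_dist_le _ (fun i => (j (σ i) : ℝ)) 1 hstep
      _ ≤ m + (k + 1 : ℕ) := by push_cast; linarith [(j (σ 0)).cast_nonneg (α := ℝ)]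

theorem half_lt_harmonic_two_pow (k : ℕ) : (k : ℝ) / 2 < harmonic (2 ^ k) :=
  calc (k : ℝ) / 2 ≤ k * Real.log 2 := by nlinarith [Real.log_two_gt_d9, k.cast_nonneg (α := ℝ)]
    _ = Real.log (2 ^ k) := (Real.log_pow 2 k).symm
    _ < Real.log (2 ^ k + 1 : ℕ) := Real.log_lt_log (by positivity) (by push_cast; linarith)
    _ ≤ harmonic (2 ^ k) := log_add_one_le_harmonic _

theorem stmt8_general (n : ℕ) :
    ∃ K : Set (EuclideanSpace ℝ (Fin 2)),
      IsCompact K ∧ Convex ℝ K ∧ (interior K).Nonempty ∧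
      ∀ p : Fin n → EuclideanSpace ℝ (Fin 2),
        (∀ i, p i ∈ Set.extremePoints ℝ K) →
        ∃ σ : Equiv.Perm (Fin n),
          ENNReal.ofReal
            (∑ i : Fin n, if h : (i : ℕ) + 1 < n
              then dist (p (σ i)) (p (σ ⟨(i : ℕ) + 1, h⟩)) else 0) <
            μH[1] (frontier K) / 2 := by
  set m := 2 ^ (48 * n + 2)
  have hm : 2 ≤ m := Nat.le_self_pow (by omega) 2
  refine ⟨graphPolygon (√·) m, ((finite_Iic m).image _).isCompact_convexHull ℝ,
    convex_convexHull ℝ _, interior_graphPolygon_nonempty Real.strictConcaveOn_sqrt hm,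
    fun p hp => ?_⟩
  obtain ⟨σ, hσ⟩ := exists_perm_pathLength_le p fun i => extremePoints_convexHull_subset (hp i)
  refine ⟨σ, ?_⟩
  set P := ∑ i ∈ Finset.range m, dist (graphVertex (√·) i) (graphVertex (√·) (i + 1)) +
    dist (graphVertex (√·) 0) (graphVertex (√·) m)
  have hP : 2 * ((m : ℝ) + n) < P := by
    have := half_lt_harmonic_two_pow (48 * n + 2)
    push_cast at this
    linarith [add_harmonic_div_le_sum_dist_graphVertex_sqrt m, natCast_le_dist_graphVertex_sqrt m]
  calc ENNReal.ofReal (pathLength (p ∘ σ)) < ENNReal.ofReal (P / 2) :=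
        (ENNReal.ofReal_lt_ofReal_iff (by linarith)).2 (by linarith)
    _ = ENNReal.ofReal P / 2 := by rw [ENNReal.ofReal_div_of_pos two_pos, ENNReal.ofReal_ofNat]
    _ ≤ μH[1] (frontier (graphPolygon (√·) m)) / 2 := by
      gcongr
      exact ofReal_le_hausdorffMeasure_frontier_graphPolygon Real.strictConcaveOn_sqrt hm

/-- For every `n ≥ 2` there is a planar compact convex body `K` such that any `n`
extreme points of `K` can be connected by a polygonal path (for a suitable ordering,
given by a permutation `σ`) of total length strictly less than half the perimeter
of `K`. -/
theorem stmt8 (n : ℕ) (hn : 2 ≤ n) :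
    ∃ K : Set (EuclideanSpace ℝ (Fin 2)),
      IsCompact K ∧ Convex ℝ K ∧ (interior K).Nonempty ∧
      ∀ p : Fin n → EuclideanSpace ℝ (Fin 2),
        (∀ i, p i ∈ Set.extremePoints ℝ K) →
        ∃ σ : Equiv.Perm (Fin n),
          ENNReal.ofReal
            (∑ i : Fin n, if h : (i : ℕ) + 1 < n
              then dist (p (σ i)) (p (σ ⟨(i : ℕ) + 1, h⟩)) else 0) <
            μH[1] (frontier K) / 2 :=
  stmt8_general n
end

section
/- Let E be the upper half of the ellipse x²/1 + y²/k² ≤ 1 with 0 < k < 1, i.e., its intersection with the closed upper half-plane, and let a = (−1,0), b = (1,0). Then for any three points p, q, r on the elliptical arc (the upper boundary of E), listed in order of increasing x-coordinate, one has |pq| + |qr| − |pr| ≤ 2√(1 + k²) − 2. -/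
/-!
The arc is the graph of the concave function `upperEllipse k x = k √(1 - x²)` on `[-1, 1]`. For
`x₁ ≤ x₂ ≤ x₃ ≤ x₄`, concavity makes the chords `P₁P₃` and `P₂P₄` of such a graph cross, and the
triangle inequality through the crossing point gives `|P₁P₄| + |P₂P₃| ≤ |P₁P₃| + |P₂P₄|`.
Applied to `a, p, q, r` and to `a, q, r, b`, with `a = (-1, 0)` and `b = (1, 0)`, this bounds
`|pq| + |qr| - |pr|` by `|aq| + |qb| - |ab|`, and `|aq| + |qb| ≤ 2√(1 + k²)` by a direct computation.
-/

open Set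

def graphPoint (f : ℝ → ℝ) (x : ℝ) : EuclideanSpace ℝ (Fin 2) := !₂[x, f x]

lemma dist_graphPoint (f : ℝ → ℝ) (x y : ℝ) :
    dist (graphPoint f x) (graphPoint f y) = √((x - y) ^ 2 + (f x - f y) ^ 2) := by
  simp [graphPoint, EuclideanSpace.dist_eq, Fin.sum_univ_two, Real.dist_eq, sq_abs]

lemma dist_add_dist_le_of_segment_inter_nonempty {E : Type*} [SeminormedAddCommGroup E]
    [NormedSpace ℝ E] {a b c d : E} (h : (segment ℝ a c ∩ segment ℝ b d).Nonempty) :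
    dist a d + dist b c ≤ dist a c + dist b d := by
  obtain ⟨z, hac, hbd⟩ := h
  have := dist_add_dist_of_mem_segment hac
  have := dist_add_dist_of_mem_segment hbd
  linarith [dist_triangle a z d, dist_triangle b z c]

lemma chord_mem_segment_graphPoint (f : ℝ → ℝ) {a b x : ℝ} (hab : a < b) (hx : x ∈ Icc a b) :
    !₂[x, f a + (x - a) * slope f a b] ∈ segment ℝ (graphPoint f a) (graphPoint f b) := by
  have hba : b - a ≠ 0 := sub_ne_zero.2 hab.ne'
  refine ⟨(b - x) / (b - a), (x - a) / (b - a), div_nonneg (by linarith [hx.2]) (by linarith),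
    div_nonneg (by linarith [hx.1]) (by linarith), by field_simp; ring, ?_⟩
  ext i
  fin_cases i <;> simp only [graphPoint, Fin.zero_eta, Fin.mk_one, Fin.isValue, PiLp.add_apply,
    PiLp.smul_apply, Matrix.cons_val_zero, Matrix.cons_val_one, Matrix.cons_val_fin_one, smul_eq_mul,
    slope_def_field] <;> field_simp <;> ring

lemma ConcaveOn.chord_le {f : ℝ → ℝ} {s : Set ℝ} (hf : ConcaveOn ℝ s f) {a b x : ℝ}
    (ha : a ∈ s) (hb : b ∈ s) (hax : a ≤ x) (hxb : x ≤ b) :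
    f a + (x - a) * slope f a b ≤ f x := by
  rcases hax.eq_or_lt with rfl | hax
  · simp
  have hx : x ∈ s := hf.1.ordConnected.out ha hb ⟨hax.le, hxb⟩
  have hslope : slope f a b ≤ slope f a x :=
    hf.slope_anti ha ⟨hx, hax.ne'⟩ ⟨hb, (hax.trans_le hxb).ne'⟩ hxb
  have hfx : f a + (x - a) * slope f a x = f x := by
    simpa [add_comm] using sub_smul_slope_vadd f a x
  nlinarith

lemma ConcaveOn.segment_graphPoint_inter_nonempty {f : ℝ → ℝ} {s : Set ℝ} (hf : ConcaveOn ℝ s f)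
    {x₁ x₂ x₃ x₄ : ℝ} (h₁ : x₁ ∈ s) (h₄ : x₄ ∈ s) (h₁₂ : x₁ ≤ x₂) (h₂₃ : x₂ ≤ x₃)
    (h₃₄ : x₃ ≤ x₄) :
    (segment ℝ (graphPoint f x₁) (graphPoint f x₃) ∩
      segment ℝ (graphPoint f x₂) (graphPoint f x₄)).Nonempty := by
  rcases (h₁₂.trans h₂₃).eq_or_lt with h₁₃ | h₁₃
  · obtain rfl : x₂ = x₁ := le_antisymm (h₁₃ ▸ h₂₃) h₁₂
    exact ⟨_, left_mem_segment ℝ _ _, left_mem_segment ℝ _ _⟩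
  rcases (h₂₃.trans h₃₄).eq_or_lt with h₂₄ | h₂₄
  · obtain rfl : x₃ = x₄ := le_antisymm h₃₄ (h₂₄ ▸ h₂₃)
    exact ⟨_, right_mem_segment ℝ _ _, right_mem_segment ℝ _ _⟩
  have hs : Icc x₁ x₄ ⊆ s := hf.1.ordConnected.out h₁ h₄
  have h₂ : x₂ ∈ s := hs ⟨h₁₂, h₂₃.trans h₃₄⟩
  have h₃ : x₃ ∈ s := hs ⟨h₁₂.trans h₂₃, h₃₄⟩
  set c₁₃ : ℝ → ℝ := fun x ↦ f x₁ + (x - x₁) * slope f x₁ x₃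
  set c₂₄ : ℝ → ℝ := fun x ↦ f x₂ + (x - x₂) * slope f x₂ x₄
  have hc₁₃ : c₁₃ x₃ = f x₃ := by simpa [add_comm] using sub_smul_slope_vadd f x₁ x₃
  have hφ₂ : c₁₃ x₂ - c₂₄ x₂ ≤ 0 := by
    simpa [c₂₄] using hf.chord_le h₁ h₃ h₁₂ h₂₃
  have hφ₃ : 0 ≤ c₁₃ x₃ - c₂₄ x₃ := by
    simpa [hc₁₃] using hf.chord_le h₂ h₄ h₂₃ h₃₄
  obtain ⟨x, hx, hφx⟩ := intermediate_value_Icc h₂₃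
    (by fun_prop : Continuous fun x ↦ c₁₃ x - c₂₄ x).continuousOn ⟨hφ₂, hφ₃⟩
  refine ⟨!₂[x, c₁₃ x], chord_mem_segment_graphPoint f h₁₃ ⟨h₁₂.trans hx.1, hx.2⟩, ?_⟩
  rw [show c₁₃ x = c₂₄ x by linarith]
  exact chord_mem_segment_graphPoint f h₂₄ ⟨hx.1, hx.2.trans h₃₄⟩

lemma ConcaveOn.dist_add_dist_graphPoint_le {f : ℝ → ℝ} {s : Set ℝ} (hf : ConcaveOn ℝ s f)
    {x₁ x₂ x₃ x₄ : ℝ} (h₁ : x₁ ∈ s) (h₄ : x₄ ∈ s) (h₁₂ : x₁ ≤ x₂) (h₂₃ : x₂ ≤ x₃)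
    (h₃₄ : x₃ ≤ x₄) :
    dist (graphPoint f x₁) (graphPoint f x₄) + dist (graphPoint f x₂) (graphPoint f x₃) ≤
      dist (graphPoint f x₁) (graphPoint f x₃) + dist (graphPoint f x₂) (graphPoint f x₄) :=
  dist_add_dist_le_of_segment_inter_nonempty
    (hf.segment_graphPoint_inter_nonempty h₁ h₄ h₁₂ h₂₃ h₃₄)

noncomputable def upperEllipse (k x : ℝ) : ℝ := k * √(1 - x ^ 2)

lemma concaveOn_sqrt_one_sub_sq : ConcaveOn ℝ (Icc (-1) 1) fun x : ℝ ↦ √(1 - x ^ 2) := by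
  refine ⟨convex_Icc _ _, fun x hx y hy a b ha hb hab ↦ ?_⟩
  have hx2 : x ^ 2 ≤ 1 := sq_le_one_iff_abs_le_one _ |>.2 (abs_le.2 hx)
  have hy2 : y ^ 2 ≤ 1 := sq_le_one_iff_abs_le_one _ |>.2 (abs_le.2 hy)
  have hu := Real.sq_sqrt (sub_nonneg.2 hx2)
  have hv := Real.sq_sqrt (sub_nonneg.2 hy2)
  obtain rfl : b = 1 - a := by linarith
  simp only [smul_eq_mul]
  refine Real.le_sqrt_of_sq_le ?_
  -- convexity of the unit disc
  nlinarith [mul_nonneg (mul_nonneg ha hb) (sq_nonneg (x - y)),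
    mul_nonneg (mul_nonneg ha hb) (sq_nonneg (√(1 - x ^ 2) - √(1 - y ^ 2)))]

lemma concaveOn_upperEllipse {k : ℝ} (hk : 0 ≤ k) : ConcaveOn ℝ (Icc (-1) 1) (upperEllipse k) :=
  concaveOn_sqrt_one_sub_sq.smul hk

lemma sqrt_add_sqrt_le_two_mul_sqrt {k v : ℝ} (hv : v ^ 2 ≤ 1) :
    √((1 + v) ^ 2 + k ^ 2 * (1 - v ^ 2)) + √((1 - v) ^ 2 + k ^ 2 * (1 - v ^ 2)) ≤
      2 * √(1 + k ^ 2) := by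
  set P := (1 + v) ^ 2 + k ^ 2 * (1 - v ^ 2)
  set Q := (1 - v) ^ 2 + k ^ 2 * (1 - v ^ 2)
  set M := (1 - v ^ 2) + k ^ 2 * (1 + v ^ 2)
  have h1v : 0 ≤ 1 - v ^ 2 := sub_nonneg.2 hv
  have hP : 0 ≤ P := by positivity
  have hQ : 0 ≤ Q := by positivity
  -- `M ^ 2 - P * Q = 4 k⁴ v²` and `P + Q + 2 M = 4 (1 + k²)`
  have hPQ : √P * √Q ≤ M := by
    rw [← Real.sqrt_mul hP, Real.sqrt_le_iff]
    exact ⟨by positivity, by nlinarith [sq_nonneg (k ^ 2 * v)]⟩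
  refine le_of_pow_le_pow_left₀ two_ne_zero (by positivity) ?_
  nlinarith [Real.sq_sqrt hP, Real.sq_sqrt hQ, Real.sq_sqrt (by positivity : (0 : ℝ) ≤ 1 + k ^ 2)]

lemma upperEllipse_sq {k x : ℝ} (hx : x ^ 2 ≤ 1) : upperEllipse k x ^ 2 = k ^ 2 * (1 - x ^ 2) := by
  rw [upperEllipse, mul_pow, Real.sq_sqrt (sub_nonneg.2 hx)]

@[simp] lemma upperEllipse_neg_one (k : ℝ) : upperEllipse k (-1) = 0 := by simp [upperEllipse]

@[simp] lemma upperEllipse_one (k : ℝ) : upperEllipse k 1 = 0 := by simp [upperEllipse]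

lemma dist_graphPoint_upperEllipse_add_le (k : ℝ) {v : ℝ} (hv : v ^ 2 ≤ 1) :
    dist (graphPoint (upperEllipse k) (-1)) (graphPoint (upperEllipse k) v) +
      dist (graphPoint (upperEllipse k) v) (graphPoint (upperEllipse k) 1) ≤
      2 * √(1 + k ^ 2) := by
  have h := sqrt_add_sqrt_le_two_mul_sqrt (k := k) hv
  rw [← upperEllipse_sq hv] at h
  rw [dist_graphPoint, dist_graphPoint, upperEllipse_neg_one, upperEllipse_one]
  convert h using 3 <;> ring

lemma mem_Icc_of_sq_add_sq_div_eq_one {k x y : ℝ} (h : x ^ 2 + y ^ 2 / k ^ 2 = 1) :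
    x ∈ Icc (-1) 1 := by
  have : x ^ 2 ≤ 1 := by linarith [div_nonneg (sq_nonneg y) (sq_nonneg k)]
  exact abs_le.1 ((sq_le_one_iff_abs_le_one x).1 this)

lemma eq_graphPoint_upperEllipse {k : ℝ} (hk : 0 < k) {p : EuclideanSpace ℝ (Fin 2)}
    (hp : p 0 ^ 2 + p 1 ^ 2 / k ^ 2 = 1) (hp' : 0 ≤ p 1) :
    p = graphPoint (upperEllipse k) (p 0) := by
  have hp1 : p 1 = upperEllipse k (p 0) := by
    have hsq : p 1 ^ 2 = k ^ 2 * (1 - p 0 ^ 2) := by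
      field_simp at hp
      linarith
    rw [upperEllipse, ← Real.sqrt_sq hk.le, ← Real.sqrt_mul (sq_nonneg k), ← hsq, Real.sqrt_sq hp']
  ext i
  fin_cases i <;> simp [graphPoint, hp1]

theorem stmt9_general (k : ℝ) (hk0 : 0 < k)
    (p q r : EuclideanSpace ℝ (Fin 2))
    (hp : (p 0) ^ 2 + (p 1) ^ 2 / k ^ 2 = 1) (hp' : 0 ≤ p 1)
    (hq : (q 0) ^ 2 + (q 1) ^ 2 / k ^ 2 = 1) (hq' : 0 ≤ q 1)
    (hr : (r 0) ^ 2 + (r 1) ^ 2 / k ^ 2 = 1) (hr' : 0 ≤ r 1)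
    (hpq : p 0 ≤ q 0) (hqr : q 0 ≤ r 0) :
    dist p q + dist q r - dist p r ≤ 2 * Real.sqrt (1 + k ^ 2) - 2 := by
  have hf := concaveOn_upperEllipse hk0.le
  have hp₀ := mem_Icc_of_sq_add_sq_div_eq_one hp
  have hq₀ := mem_Icc_of_sq_add_sq_div_eq_one hq
  have hr₀ := mem_Icc_of_sq_add_sq_div_eq_one hr
  have ha : (-1 : ℝ) ∈ Icc (-1) 1 := left_mem_Icc.2 (by norm_num)
  have hb : (1 : ℝ) ∈ Icc (-1) 1 := right_mem_Icc.2 (by norm_num)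
  have hdist_ab : dist (graphPoint (upperEllipse k) (-1)) (graphPoint (upperEllipse k) 1) = 2 := by
    norm_num [dist_graphPoint]
  rw [eq_graphPoint_upperEllipse hk0 hp hp', eq_graphPoint_upperEllipse hk0 hq hq',
    eq_graphPoint_upperEllipse hk0 hr hr']
  have hapqr := hf.dist_add_dist_graphPoint_le ha hr₀ hp₀.1 hpq hqr
  have haqrb := hf.dist_add_dist_graphPoint_le ha hb hq₀.1 hqr hr₀.2
  have haqb :=
    dist_graphPoint_upperEllipse_add_le k ((sq_le_one_iff_abs_le_one _).2 (abs_le.2 hq₀))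
  linarith

/-- For three points `p, q, r` on the upper half of the ellipse `x² + y²/k² = 1`
(`0 < k < 1`), listed in order of increasing `x`-coordinate,
`|pq| + |qr| − |pr| ≤ 2√(1 + k²) − 2`. -/
theorem stmt9 (k : ℝ) (hk0 : 0 < k) (hk1 : k < 1)
    (p q r : EuclideanSpace ℝ (Fin 2))
    (hp : (p 0) ^ 2 + (p 1) ^ 2 / k ^ 2 = 1) (hp' : 0 ≤ p 1)
    (hq : (q 0) ^ 2 + (q 1) ^ 2 / k ^ 2 = 1) (hq' : 0 ≤ q 1)
    (hr : (r 0) ^ 2 + (r 1) ^ 2 / k ^ 2 = 1) (hr' : 0 ≤ r 1)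
    (hpq : p 0 ≤ q 0) (hqr : q 0 ≤ r 0) :
    dist p q + dist q r - dist p r ≤ 2 * Real.sqrt (1 + k ^ 2) - 2 :=
  stmt9_general k hk0 p q r hp hp' hq hq' hr hr' hpq hqr
end

section
/- Let a = (−1, 0) and b = (1, 0), and let m be a point on the upper half of the ellipse x² + y²/k² = 1 (with 0 < k < 1, y ≥ 0). Then |am| + |mb| ≤ 2√(1 + k²), with equality if and only if m = (0, k). -/
/-!
On the ellipse `y² = k²(1 - x²)`, hence the squared distances from `m = (x, y)` to `(∓1, 0)` are
the quadratics `(1 - k²)x² ± 2x + 1 + k²`. Multiplying by `1 + k²` gives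
`(1 + k² ± x)² - k⁴x²`, so `√(1 + k²) · |am| ≤ 1 + k² + x` and `√(1 + k²) · |mb| ≤ 1 + k² - x`,
each with equality iff `x = 0`. Adding the two bounds gives `|am| + |mb| ≤ 2√(1 + k²)`.
-/

open Real

lemma dist_sq_of_mem_ellipse {k : ℝ} (hk : k ≠ 0) {p m : EuclideanSpace ℝ (Fin 2)}
    (hp : p 1 = 0) (hm : m 0 ^ 2 + m 1 ^ 2 / k ^ 2 = 1) :
    dist p m ^ 2 = (1 - k ^ 2) * m 0 ^ 2 - 2 * p 0 * m 0 + p 0 ^ 2 + k ^ 2 := by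
  have hy : m 1 ^ 2 = k ^ 2 * (1 - m 0 ^ 2) := by
    field_simp at hm
    linear_combination hm
  rw [EuclideanSpace.dist_eq, sq_sqrt (by positivity), Fin.sum_univ_two, Real.dist_eq,
    Real.dist_eq, sq_abs, sq_abs, hp]
  linear_combination hy

section FocalBound

variable {k t d : ℝ}

lemma sq_sqrt_one_add_sq_mul (hd : d ^ 2 = (1 - k ^ 2) * t ^ 2 + 2 * t + 1 + k ^ 2) :
    (√(1 + k ^ 2) * d) ^ 2 = (1 + k ^ 2 + t) ^ 2 - k ^ 4 * t ^ 2 := by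
  rw [mul_pow, sq_sqrt (by positivity), hd]
  ring

lemma sqrt_one_add_sq_mul_le (hd : d ^ 2 = (1 - k ^ 2) * t ^ 2 + 2 * t + 1 + k ^ 2)
    (hd0 : 0 ≤ d) (ht : 0 ≤ 1 + k ^ 2 + t) :
    √(1 + k ^ 2) * d ≤ 1 + k ^ 2 + t := by
  refine (pow_le_pow_iff_left₀ (by positivity) ht two_ne_zero).mp ?_
  rw [sq_sqrt_one_add_sq_mul hd]
  exact sub_le_self _ (by positivity)

lemma sqrt_one_add_sq_mul_eq_iff (hd : d ^ 2 = (1 - k ^ 2) * t ^ 2 + 2 * t + 1 + k ^ 2)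
    (hk : k ≠ 0) (hd0 : 0 ≤ d) (ht : 0 ≤ 1 + k ^ 2 + t) :
    √(1 + k ^ 2) * d = 1 + k ^ 2 + t ↔ t = 0 := by
  rw [← sq_eq_sq₀ (by positivity) ht, sq_sqrt_one_add_sq_mul hd, sub_eq_self]
  simp [hk]

end FocalBound

theorem stmt10_general (k : ℝ) (hk0 : 0 < k)
    (a b m : EuclideanSpace ℝ (Fin 2))
    (ha : a 0 = -1 ∧ a 1 = 0) (hb : b 0 = 1 ∧ b 1 = 0)
    (hm : (m 0) ^ 2 + (m 1) ^ 2 / k ^ 2 = 1) (hm' : 0 ≤ m 1) :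
    dist a m + dist m b ≤ 2 * Real.sqrt (1 + k ^ 2) ∧
      (dist a m + dist m b = 2 * Real.sqrt (1 + k ^ 2) ↔ m 0 = 0 ∧ m 1 = k) := by
  obtain ⟨ha0, ha1⟩ := ha
  obtain ⟨hb0, hb1⟩ := hb
  set x := m 0
  have hx : x ^ 2 ≤ 1 := by
    have := div_nonneg (sq_nonneg (m 1)) (sq_nonneg k)
    linarith
  have hda : dist a m ^ 2 = (1 - k ^ 2) * x ^ 2 + 2 * x + 1 + k ^ 2 := by
    rw [dist_sq_of_mem_ellipse hk0.ne' ha1 hm, ha0]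
    ring
  have hdb : dist m b ^ 2 = (1 - k ^ 2) * (-x) ^ 2 + 2 * (-x) + 1 + k ^ 2 := by
    rw [dist_comm, dist_sq_of_mem_ellipse hk0.ne' hb1 hm, hb0]
    ring
  have hxa : 0 ≤ 1 + k ^ 2 + x := by nlinarith
  have hxb : 0 ≤ 1 + k ^ 2 + -x := by nlinarith
  have hs : 0 < √(1 + k ^ 2) := by positivity
  have hsum : √(1 + k ^ 2) * (2 * √(1 + k ^ 2)) = (1 + k ^ 2 + x) + (1 + k ^ 2 + -x) := by
    rw [mul_left_comm, mul_self_sqrt (by positivity)]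
    ring
  have hle_a := sqrt_one_add_sq_mul_le hda dist_nonneg hxa
  have hle_b := sqrt_one_add_sq_mul_le hdb dist_nonneg hxb
  refine ⟨le_of_mul_le_mul_left (by rw [mul_add, hsum]; linarith) hs, ?_⟩
  rw [← mul_right_inj' hs.ne', mul_add, hsum, add_eq_add_iff_eq_and_eq hle_a hle_b,
    sqrt_one_add_sq_mul_eq_iff hda hk0.ne' dist_nonneg hxa,
    sqrt_one_add_sq_mul_eq_iff hdb hk0.ne' dist_nonneg hxb, neg_eq_zero, and_self]
  refine ⟨fun hx0 => ⟨hx0, ?_⟩, And.left⟩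
  rw [hx0] at hm
  field_simp at hm
  exact (sq_eq_sq₀ hm' hk0.le).mp (by linarith)

/-- For `a = (−1,0)`, `b = (1,0)` and `m` on the upper half of the ellipse
`x² + y²/k² = 1` (`0 < k < 1`), `|am| + |mb| ≤ 2√(1 + k²)`, with equality
iff `m = (0, k)`. -/
theorem stmt10 (k : ℝ) (hk0 : 0 < k) (hk1 : k < 1)
    (a b m : EuclideanSpace ℝ (Fin 2))
    (ha : a 0 = -1 ∧ a 1 = 0) (hb : b 0 = 1 ∧ b 1 = 0)
    (hm : (m 0) ^ 2 + (m 1) ^ 2 / k ^ 2 = 1) (hm' : 0 ≤ m 1) :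
    dist a m + dist m b ≤ 2 * Real.sqrt (1 + k ^ 2) ∧
      (dist a m + dist m b = 2 * Real.sqrt (1 + k ^ 2) ↔ m 0 = 0 ∧ m 1 = k) :=
  stmt10_general k hk0 a b m ha hb hm hm'
end

section
/- Let V be a convex polygon with vertices v₁, …, vₙ (n ≥ 3) contained in a compact convex set K, such that for each i there is a support line of K through vᵢ whose outer normal makes angle 2πi/n with a fixed direction. Then the perimeter of K is at most (perimeter of V)/cos(π/n). -/
open MeasureTheory Real
open scoped RealInnerProductSpace

noncomputable section Aux12

abbrev EE12 := EuclideanSpace ℝ (Fin 2)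

def rot12 (x : EE12) : EE12 := (WithLp.equiv 2 (Fin 2 → ℝ)).symm ![-x 1, x 0]

@[simp] lemma rot12_apply0 (x : EE12) : rot12 x 0 = -x 1 := rfl
@[simp] lemma rot12_apply1 (x : EE12) : rot12 x 1 = x 0 := rfl

lemma inner_formula12 (x y : EE12) : ⟪x, y⟫ = x 0 * y 0 + x 1 * y 1 := by
  simp [PiLp.inner_apply, Fin.sum_univ_two, RCLike.inner_apply]; ring

lemma inner_rot_rot12 (x y : EE12) : ⟪rot12 x, rot12 y⟫ = ⟪x, y⟫ := by
  simp [inner_formula12]; ring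

lemma inner_rot_self12 (x : EE12) : ⟪rot12 x, x⟫ = 0 := by
  simp [inner_formula12]; ring

lemma norm_unit12 (x : EE12) (h0 : x 0 ^ 2 + x 1 ^ 2 = 1) : ‖x‖ = 1 := by
  have h := real_inner_self_eq_norm_sq x
  rw [inner_formula12] at h
  nlinarith [norm_nonneg x]

lemma norm_rot12 (x : EE12) : ‖rot12 x‖ = ‖x‖ := by
  have h1 := real_inner_self_eq_norm_sq (rot12 x)
  have h2 := real_inner_self_eq_norm_sq x
  rw [inner_rot_rot12, h2] at h1
  nlinarith [norm_nonneg x, norm_nonneg (rot12 x)]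

lemma decomp12 (x z : EE12) (hx : ‖x‖ = 1) (h : ⟪z, x⟫ = 0) : z = ⟪z, rot12 x⟫ • rot12 x := by
  have hx2 : x 0 ^ 2 + x 1 ^ 2 = 1 := by
    have := real_inner_self_eq_norm_sq x
    rw [hx] at this
    rw [inner_formula12] at this
    nlinarith
  rw [inner_formula12] at h
  rw [inner_formula12]
  ext i
  fin_cases i <;>
    simp only [Fin.mk_zero, Fin.mk_one, Fin.isValue, PiLp.smul_apply, smul_eq_mul,
      rot12_apply0, rot12_apply1]
  · linear_combination x 0 * h - z 0 * hx2
  · linear_combination x 1 * h - z 1 * hx2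

lemma seg_mem12 (v d : EE12) (s σ : ℝ) (h0 : 0 ≤ σ) (h1 : σ ≤ s) :
    v + σ • d ∈ segment ℝ v (v + s • d) := by
  rcases eq_or_lt_of_le (h0.trans h1) with h | h
  · have hσ : σ = 0 := le_antisymm (h1.trans h.symm.le) h0
    rw [hσ]
    simp only [zero_smul, add_zero]
    exact left_mem_segment ℝ v _
  · rw [segment_eq_image']
    refine ⟨σ / s, ⟨div_nonneg h0 h.le, div_le_one_of_le₀ h1 h.le⟩, ?_⟩
    simp only [add_sub_cancel_left, smul_smul]
    rw [div_mul_cancel₀ σ h.ne']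

lemma exists_proj12 (K : Set EE12) (hne : K.Nonempty) (hc : IsClosed K) (hconv : Convex ℝ K) :
    ∃ p : EE12 → EE12, LipschitzWith 1 p ∧
      (∀ z y, y ∈ K → (∀ x ∈ K, ⟪z - y, x - y⟫ ≤ 0) → p z = y) := by
  have hex : ∀ z : EE12, ∃ y ∈ K, ‖z - y‖ = ⨅ w : K, ‖z - w‖ :=
    fun z => exists_norm_eq_iInf_of_complete_convex hne hc.isComplete hconv z
  choose p hpK hpmin using hex
  have hkey : ∀ z, ∀ x ∈ K, ⟪z - p z, x - p z⟫ ≤ 0 := fun z =>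
    (norm_eq_iInf_iff_real_inner_le_zero hconv (hpK z)).1 (hpmin z)
  refine ⟨p, ?_, ?_⟩
  · refine LipschitzWith.of_dist_le_mul fun z₁ z₂ => ?_
    have h1 := hkey z₁ (p z₂) (hpK z₂)
    have h2 := hkey z₂ (p z₁) (hpK z₁)
    have hb : ‖p z₁ - p z₂‖ ^ 2 ≤ ⟪z₁ - z₂, p z₁ - p z₂⟫ := by
      have e : ⟪z₁ - z₂, p z₁ - p z₂⟫ - ‖p z₁ - p z₂‖ ^ 2
          = -⟪z₁ - p z₁, p z₂ - p z₁⟫ - ⟪z₂ - p z₂, p z₁ - p z₂⟫ := by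
        rw [← real_inner_self_eq_norm_sq]
        simp only [inner_sub_left, inner_sub_right]
        ring
      linarith [e, h1, h2]
    have hc2 : ⟪z₁ - z₂, p z₁ - p z₂⟫ ≤ ‖z₁ - z₂‖ * ‖p z₁ - p z₂‖ := real_inner_le_norm _ _
    rw [dist_eq_norm, dist_eq_norm, NNReal.coe_one, one_mul]
    nlinarith [norm_nonneg (p z₁ - p z₂), norm_nonneg (z₁ - z₂)]
  · intro z y hyK hy
    have h1 := hkey z y hyK
    have h2 := hy (p z) (hpK z)
    have hsq : ‖y - p z‖ ^ 2 ≤ 0 := by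
      have e : ‖y - p z‖ ^ 2 = ⟪z - p z, y - p z⟫ + ⟪z - y, p z - y⟫ := by
        rw [← real_inner_self_eq_norm_sq]
        simp only [inner_sub_left, inner_sub_right]
        ring
      linarith
    have hz0 : y - p z = 0 := by
      have := norm_nonneg (y - p z)
      have hn : ‖y - p z‖ = 0 := by nlinarith
      exact norm_eq_zero.mp hn
    exact (sub_eq_zero.mp hz0).symm

lemma exists_support12 (K : Set EE12) (hconv : Convex ℝ K)
    (hint : (interior K).Nonempty) {y : EE12} (hy : y ∈ frontier K) :
    ∃ w : EE12, w ≠ 0 ∧ ∀ x ∈ K, ⟪x, w⟫ ≤ ⟪y, w⟫ := by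
  obtain ⟨x₀, hx₀⟩ := hint
  have hyno : y ∉ interior K := hy.2
  obtain ⟨f, hf⟩ := geometric_hahn_banach_open_point (hconv.interior) isOpen_interior hyno
  set w : EE12 := (InnerProductSpace.toDual ℝ EE12).symm f with hw
  have hwf : ∀ x : EE12, ⟪x, w⟫ = f x := by
    intro x
    rw [real_inner_comm]
    exact InnerProductSpace.toDual_symm_apply
  have hw0 : w ≠ 0 := by
    intro h0
    have hfx : f x₀ = 0 := by rw [← hwf x₀, h0, inner_zero_right]
    have hfy : f y = 0 := by rw [← hwf y, h0, inner_zero_right]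
    have h1 := hf x₀ hx₀
    rw [hfx, hfy] at h1
    exact lt_irrefl 0 h1
  refine ⟨w, hw0, fun x hx => ?_⟩
  rw [hwf, hwf]
  have hseq : ∀ k : ℕ, f ((1/(k+1) : ℝ) • x₀ + (1 - 1/(k+1) : ℝ) • x) < f y := by
    intro k
    have hk : (0:ℝ) < 1/(k+1) := by positivity
    have hk1 : (1/(k+1) : ℝ) ≤ 1 := by
      rw [div_le_one (by positivity)]
      simp
    have hmem := hconv.combo_interior_closure_mem_interior (b := 1 - 1/(k+1)) hx₀
      (subset_closure hx) hk (by linarith) (by ring)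
    exact hf _ hmem
  have htend : Filter.Tendsto (fun k : ℕ => f ((1/(k+1) : ℝ) • x₀ + (1 - 1/(k+1) : ℝ) • x))
      Filter.atTop (nhds (f x)) := by
    have h0 : Filter.Tendsto (fun k : ℕ => (1/(k+1) : ℝ)) Filter.atTop (nhds 0) :=
      tendsto_one_div_add_atTop_nhds_zero_nat
    have hcont : Continuous fun t : ℝ => f (t • x₀ + (1 - t) • x) :=
      f.continuous.comp ((continuous_id.smul continuous_const).add
        ((continuous_const.sub continuous_id).smul continuous_const))
    have := (hcont.tendsto 0).comp h0
    simpa [Function.comp_def] using this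
  exact le_of_tendsto htend (Filter.Eventually.of_forall fun k => (hseq k).le)

lemma covering12 (n : ℕ) [NeZero n] (hn : 3 ≤ n) (u : Fin n → EE12)
    (hu : ∀ i : Fin n, u i 0 = Real.cos (2 * π * (i : ℕ) / n) ∧
      u i 1 = Real.sin (2 * π * (i : ℕ) / n))
    (w : EE12) (hw : w ≠ 0) : ∃ i : Fin n, Real.cos (π / n) * ‖w‖ ≤ ⟪w, u i⟫ := by
  have hnpos : (0:ℝ) < n := by positivity
  have hr : (0:ℝ) < ‖w‖ := norm_pos_iff.mpr hw
  set r := ‖w‖ with hrdef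
  set z : ℂ := ⟨w 0, w 1⟩ with hz
  have habs : ‖z‖ = r := by
    rw [Complex.norm_def, Complex.normSq_mk, hrdef, EuclideanSpace.norm_eq]
    congr 1
    rw [Fin.sum_univ_two]
    simp [sq_abs]
    ring
  have hz0 : z ≠ 0 := by
    intro h
    rw [h, norm_zero] at habs
    exact hr.ne habs
  set θ := z.arg with hθ
  have hcos : w 0 = r * Real.cos θ := by
    rw [Complex.cos_arg hz0, habs]
    field_simp
    rfl
  have hsin : w 1 = r * Real.sin θ := by
    rw [Complex.sin_arg, habs]
    field_simp
    rfl
  set k : ℤ := round ((n:ℝ) * θ / (2*π)) with hk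
  have hround : |(n:ℝ) * θ / (2*π) - k| ≤ 1/2 := abs_sub_round _
  have hmlt : ((k % (n:ℤ)).toNat) < n := by
    have h1 : 0 ≤ k % (n:ℤ) := Int.emod_nonneg k (by exact_mod_cast (NeZero.ne n))
    have h2 : k % (n:ℤ) < n := Int.emod_lt_of_pos k
      (by exact_mod_cast Nat.pos_of_ne_zero (NeZero.ne n))
    omega
  set m : ℕ := (k % (n:ℤ)).toNat with hm
  set q : ℤ := k / (n:ℤ) with hq
  have hkq : (k:ℤ) = n * q + m := by
    have h1 : 0 ≤ k % (n:ℤ) := Int.emod_nonneg k (by exact_mod_cast (NeZero.ne n))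
    rw [hq, hm, Int.toNat_of_nonneg h1]
    linarith [Int.mul_ediv_add_emod k (n:ℤ)]
  set i : Fin n := ⟨m, hmlt⟩ with hi
  set δ := θ - 2*π*k/n with hδ
  have hδabs : |δ| ≤ π / n := by
    have hn0 : (n:ℝ) ≠ 0 := hnpos.ne'
    have hπ0 : π ≠ 0 := pi_ne_zero
    have hδ2 : δ = (2*π/n) * ((n:ℝ) * θ / (2*π) - k) := by
      rw [hδ]
      field_simp
    rw [hδ2, abs_mul, abs_of_pos (by positivity)]
    calc 2*π/n * |(n:ℝ) * θ / (2*π) - k| ≤ 2*π/n * (1/2) := by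
          apply mul_le_mul_of_nonneg_left hround (by positivity)
      _ = π / n := by ring
  have hθi : θ - 2 * π * (i : ℕ) / n = δ + q * (2*π) := by
    rw [hδ]
    have hmr : ((m:ℝ)) = (k:ℝ) - (n:ℝ) * (q:ℝ) := by
      have : ((k:ℝ)) = (n:ℝ) * (q:ℝ) + (m:ℝ) := by
        exact_mod_cast congrArg (Int.cast : ℤ → ℝ) hkq
      linarith
    show θ - 2 * π * (m:ℝ) / n = _
    rw [hmr]
    field_simp
    ring
  have hinner : ⟪w, u i⟫ = r * Real.cos δ := by
    rw [inner_formula12, (hu i).1, (hu i).2, hcos, hsin]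
    have he : r * Real.cos θ * Real.cos (2 * π * (i:ℕ) / n)
        + r * Real.sin θ * Real.sin (2 * π * (i:ℕ) / n)
        = r * Real.cos (θ - 2 * π * (i:ℕ) / n) := by
      rw [Real.cos_sub]
      ring
    rw [he, hθi, Real.cos_add_int_mul_two_pi]
  refine ⟨i, ?_⟩
  rw [hinner]
  have hcosle : Real.cos (π / n) ≤ Real.cos δ := by
    rw [← Real.cos_abs δ]
    apply Real.cos_le_cos_of_nonneg_of_le_pi (abs_nonneg _) ?_ hδabs
    calc π / n ≤ π / 1 := by
          apply div_le_div_of_nonneg_left pi_pos.le one_pos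
          exact_mod_cast hn.trans' (by norm_num)
      _ = π := div_one π
  nlinarith

lemma adjacent12 (n : ℕ) [NeZero n] (hn : 3 ≤ n) (u : Fin n → EE12)
    (hu : ∀ i : Fin n, u i 0 = Real.cos (2 * π * (i : ℕ) / n) ∧
      u i 1 = Real.sin (2 * π * (i : ℕ) / n)) (i : Fin n) :
    ⟪u i, u (i+1)⟫ = Real.cos (2*π/n) ∧ ⟪rot12 (u i), u (i+1)⟫ = Real.sin (2*π/n) ∧
      ⟪rot12 (u (i+1)), u i⟫ = -Real.sin (2*π/n) := by
  have hnpos : (0:ℝ) < n := by positivity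
  have hn0 : (n:ℝ) ≠ 0 := hnpos.ne'
  obtain ⟨k, hk⟩ : ∃ k : ℤ,
      2*π*(((i+1 : Fin n) : ℕ):ℝ)/n - 2*π*((i : ℕ):ℝ)/n = 2*π/n + k*(2*π) := by
    have hval : ((i+1 : Fin n) : ℕ) = ((i:ℕ) + 1) % n := by
      rw [Fin.val_add, Fin.val_one']
      rw [Nat.mod_eq_of_lt (show 1 < n by omega)]
    rcases lt_or_ge ((i:ℕ)+1) n with h | h
    · refine ⟨0, ?_⟩
      rw [hval, Nat.mod_eq_of_lt h]
      push_cast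
      field_simp
      ring
    · have hieq : (i:ℕ) + 1 = n := by omega
      refine ⟨-1, ?_⟩
      rw [hval, hieq, Nat.mod_self]
      have hir : ((i:ℕ):ℝ) = (n:ℝ) - 1 := by
        have : ((i:ℕ):ℝ) + 1 = (n:ℝ) := by exact_mod_cast congrArg (Nat.cast : ℕ → ℝ) hieq
        linarith
      rw [hir]
      push_cast
      field_simp
      ring
  refine ⟨?_, ?_, ?_⟩
  · have hc : ⟪u i, u (i+1)⟫
        = Real.cos (2*π*(((i+1 : Fin n) : ℕ):ℝ)/n - 2*π*((i : ℕ):ℝ)/n) := by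
      rw [inner_formula12, (hu i).1, (hu i).2, (hu (i+1)).1, (hu (i+1)).2, Real.cos_sub]
      ring
    rw [hc, hk, Real.cos_add_int_mul_two_pi]
  · have hc : ⟪rot12 (u i), u (i+1)⟫
        = Real.sin (2*π*(((i+1 : Fin n) : ℕ):ℝ)/n - 2*π*((i : ℕ):ℝ)/n) := by
      rw [inner_formula12]
      simp only [rot12_apply0, rot12_apply1]
      rw [(hu i).1, (hu i).2, (hu (i+1)).1, (hu (i+1)).2, Real.sin_sub]
      ring
    rw [hc, hk, Real.sin_add_int_mul_two_pi]
  · have hc : ⟪rot12 (u (i+1)), u i⟫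
        = -Real.sin (2*π*(((i+1 : Fin n) : ℕ):ℝ)/n - 2*π*((i : ℕ):ℝ)/n) := by
      rw [inner_formula12]
      simp only [rot12_apply0, rot12_apply1]
      rw [(hu i).1, (hu i).2, (hu (i+1)).1, (hu (i+1)).2, Real.sin_sub]
      ring
    rw [hc, hk, Real.sin_add_int_mul_two_pi]

lemma trig_ineq12 (n : ℕ) (hn : 3 ≤ n) (a b : EE12) (ha : ‖a‖ = 1) (hb : ‖b‖ = 1)
    (hab : ⟪a, b⟫ = Real.cos (2*π/n)) (s t : ℝ) (hs : 0 ≤ s) (ht : 0 ≤ t) :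
    (s + t) * Real.cos (π/n) ≤ ‖s • a + t • b‖ := by
  have hnpos : (0:ℝ) < n := by positivity
  set c := Real.cos (π/n) with hc
  have hc1 : c ≤ 1 := Real.cos_le_one _
  have hdouble : Real.cos (2*π/n) = 2*c^2 - 1 := by
    have h2 : 2*π/n = 2*(π/n) := by ring
    rw [h2, Real.cos_two_mul]
  have hsq : ‖s • a + t • b‖^2 = s^2 + t^2 + 2*s*t*(2*c^2-1) := by
    rw [← real_inner_self_eq_norm_sq]
    have hba : ⟪b, a⟫ = 2*c^2 - 1 := by rw [real_inner_comm]; rw [hab, hdouble]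
    have haa : ⟪a, a⟫ = (1:ℝ) := by rw [real_inner_self_eq_norm_sq, ha]; norm_num
    have hbb : ⟪b, b⟫ = (1:ℝ) := by rw [real_inner_self_eq_norm_sq, hb]; norm_num
    simp only [inner_add_left, inner_add_right, real_inner_smul_left, real_inner_smul_right,
      haa, hbb, hba]
    have hab' : ⟪a, b⟫ = 2*c^2 - 1 := by rw [hab, hdouble]
    rw [hab']
    ring
  have h2 : ((s+t)*c)^2 ≤ ‖s • a + t • b‖^2 := by
    rw [hsq]
    have hcge : (-1:ℝ) ≤ c := Real.neg_one_le_cos _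
    have h4 : 0 ≤ (1 - c^2) * (s-t)^2 := mul_nonneg (by nlinarith) (sq_nonneg _)
    nlinarith [h4]
  have h3 := Real.sqrt_le_sqrt h2
  have hc0 : 0 ≤ c := by
    apply Real.cos_nonneg_of_mem_Icc
    have hp : 0 ≤ π / n := by positivity
    constructor
    · linarith [pi_pos]
    · rw [div_le_div_iff₀ hnpos two_pos]
      nlinarith [pi_pos, (show (3:ℝ) ≤ n by exact_mod_cast hn)]
  rwa [Real.sqrt_sq (by positivity), Real.sqrt_sq (norm_nonneg _)] at h3

end Aux12

set_option maxHeartbeats 2000000 in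
/-- Let `v 0, …, v (n-1)` (`n ≥ 3`) be the vertices, in cyclic order, of a convex polygon
contained in a compact convex body `K`, such that through each `v i` there is a support
line of `K` with outer normal `u i` making angle `2πi/n` with a fixed direction. Then
`per K ≤ per V / cos (π/n)`. -/
theorem stmt12 (n : ℕ) [NeZero n] (hn : 3 ≤ n)
    (K : Set (EuclideanSpace ℝ (Fin 2)))
    (hKc : IsCompact K) (hKconv : Convex ℝ K) (hKint : (interior K).Nonempty)
    (v u : Fin n → EuclideanSpace ℝ (Fin 2))
    (hu : ∀ i : Fin n, u i 0 = Real.cos (2 * π * (i : ℕ) / n) ∧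
      u i 1 = Real.sin (2 * π * (i : ℕ) / n))
    (hvK : ∀ i, v i ∈ K)
    (hsupport : ∀ i, ∀ x ∈ K, ⟪x, u i⟫ ≤ ⟪v i, u i⟫) :
    μH[1] (frontier K) ≤
      ENNReal.ofReal ((∑ i : Fin n, dist (v i) (v (i + 1))) / Real.cos (π / n)) := by
  have hnpos : (0:ℝ) < n := by positivity
  have hKcl : IsClosed K := hKc.isClosed
  have hKne : K.Nonempty := ⟨v 0, hvK 0⟩
  have hn3 : (3:ℝ) ≤ n := by exact_mod_cast hn
  have hsinpos : 0 < Real.sin (2*π/n) := by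
    apply Real.sin_pos_of_pos_of_lt_pi
    · positivity
    · rw [div_lt_iff₀ hnpos]
      nlinarith [pi_pos]
  have hcpos : 0 < Real.cos (π/n) := by
    apply Real.cos_pos_of_mem_Ioo
    have hp : 0 ≤ π / n := by positivity
    constructor
    · linarith [pi_pos]
    · rw [div_lt_div_iff₀ hnpos two_pos]
      nlinarith [pi_pos]
  have hunorm : ∀ i, ‖u i‖ = 1 := by
    intro i
    apply norm_unit12
    rw [(hu i).1, (hu i).2]
    exact Real.cos_sq_add_sin_sq _
  have hadj := adjacent12 n hn u hu
  -- the outer polygon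
  set c : Fin n → ℝ := fun i => ⟪v i, u i⟫ with hcdef
  set P : Set EE12 := {x | ∀ i, ⟪x, u i⟫ ≤ c i} with hPdef
  have hKP : K ⊆ P := fun x hx i => hsupport i x hx
  have hPcl : IsClosed P := by
    have hPi : P = ⋂ i, {x : EE12 | ⟪x, u i⟫ ≤ c i} := by
      ext x; simp [hPdef, Set.mem_iInter]
    rw [hPi]
    exact isClosed_iInter fun i =>
      isClosed_le (Continuous.inner continuous_id continuous_const) continuous_const
  -- apex construction
  set s : Fin n → ℝ := fun i => (c (i+1) - ⟪v i, u (i+1)⟫) / Real.sin (2*π/n) with hsdef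
  have hs0 : ∀ i, 0 ≤ s i := by
    intro i
    apply div_nonneg _ hsinpos.le
    have := hsupport (i+1) (v i) (hvK i)
    simp only [sub_nonneg]
    exact this
  set w : Fin n → EE12 := fun i => v i + s i • rot12 (u i) with hwdef
  have hw_i : ∀ i, ⟪w i, u i⟫ = c i := by
    intro i
    simp only [hwdef]
    rw [inner_add_left, real_inner_smul_left, inner_rot_self12]
    simp [hcdef]
  have hw_i1 : ∀ i, ⟪w i, u (i+1)⟫ = c (i+1) := by
    intro i
    simp only [hwdef]
    rw [inner_add_left, real_inner_smul_left, (hadj i).2.1, hsdef]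
    simp only
    rw [div_mul_cancel₀ _ hsinpos.ne']
    ring
  have ht : ∀ i, ∃ t : ℝ, 0 ≤ t ∧ v (i+1) = w i + t • rot12 (u (i+1)) := by
    intro i
    have hz : ⟪v (i+1) - w i, u (i+1)⟫ = 0 := by
      rw [inner_sub_left, hw_i1]
      simp [hcdef]
    have hdec := decomp12 (u (i+1)) (v (i+1) - w i) (hunorm _) hz
    set τ := ⟪v (i+1) - w i, rot12 (u (i+1))⟫ with hτ
    refine ⟨τ, ?_, ?_⟩
    · have hle : ⟪v (i+1) - w i, u i⟫ ≤ 0 := by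
        rw [inner_sub_left, hw_i]
        have := hsupport i (v (i+1)) (hvK (i+1))
        simp only [hcdef]
        linarith
      rw [hdec] at hle
      rw [real_inner_smul_left] at hle
      rw [(hadj i).2.2] at hle
      nlinarith [hsinpos]
    · rw [← hdec]
      abel
  choose t ht0 htv using ht
  -- frontier of P is inside the union of segments
  have hfront : frontier P ⊆
      ⋃ i, (segment ℝ (v i) (w i) ∪ segment ℝ (w i) (v (i+1))) := by
    intro x hx
    have hxP : x ∈ P := hPcl.frontier_subset hx
    have hxint : x ∉ interior P := hx.2
    obtain ⟨i, hieq⟩ : ∃ i, ⟪x, u i⟫ = c i := by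
      by_contra hno
      push_neg at hno
      have hlt : ∀ i, ⟪x, u i⟫ < c i := fun i => lt_of_le_of_ne (hxP i) (hno i)
      apply hxint
      have hopen : IsOpen {y : EE12 | ∀ i, ⟪y, u i⟫ < c i} := by
        have he : {y : EE12 | ∀ i, ⟪y, u i⟫ < c i} = ⋂ i, {y | ⟪y, u i⟫ < c i} := by
          ext y; simp [Set.mem_iInter]
        rw [he]
        exact isOpen_iInter_of_finite fun i =>
          isOpen_lt (Continuous.inner continuous_id continuous_const) continuous_const
      have hsub : {y : EE12 | ∀ i, ⟪y, u i⟫ < c i} ⊆ P := fun y hy j => (hy j).le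
      exact interior_maximal hsub hopen hlt
    have hxv : ⟪x - v i, u i⟫ = 0 := by
      rw [inner_sub_left, hieq]
      simp [hcdef]
    have hdec := decomp12 (u i) (x - v i) (hunorm i) hxv
    set σ := ⟪x - v i, rot12 (u i)⟫ with hσ
    have hxeq : x = v i + σ • rot12 (u i) := by
      rw [← hdec]
      abel
    rcases le_or_gt 0 σ with hσ0 | hσ0
    · have hσle : σ ≤ s i := by
        have h1 : ⟪x, u (i+1)⟫ ≤ c (i+1) := hxP (i+1)
        rw [← hw_i1 i] at h1
        rw [hxeq] at h1
        simp only [hwdef] at h1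
        rw [inner_add_left, inner_add_left, real_inner_smul_left, real_inner_smul_left,
          (hadj i).2.1] at h1
        have := hsinpos
        nlinarith
      refine Set.mem_iUnion.mpr ⟨i, Or.inl ?_⟩
      rw [hxeq]
      have hwi : w i = v i + s i • rot12 (u i) := rfl
      rw [hwi]
      exact seg_mem12 _ _ _ _ hσ0 hσle
    · refine Set.mem_iUnion.mpr ⟨i-1, Or.inr ?_⟩
      have hi1 : (i-1) + 1 = i := sub_add_cancel i 1
      have hvi : v i = w (i-1) + t (i-1) • rot12 (u i) := by
        have := htv (i-1)
        rwa [hi1] at this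
      have hσge : 0 ≤ σ + t (i-1) := by
        have h1 : ⟪x, u (i-1)⟫ ≤ c (i-1) := hxP (i-1)
        rw [← hw_i (i-1)] at h1
        have hxw : x - w (i-1) = (σ + t (i-1)) • rot12 (u i) := by
          rw [hxeq, hvi]
          module
        have h2 : ⟪x - w (i-1), u (i-1)⟫ ≤ 0 := by
          rw [inner_sub_left]; linarith
        rw [hxw, real_inner_smul_left] at h2
        have h3 : ⟪rot12 (u i), u (i-1)⟫ = -Real.sin (2*π/n) := by
          have := (hadj (i-1)).2.2
          rwa [hi1] at this
        rw [h3] at h2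
        nlinarith [hsinpos]
      have hxw : x = w (i-1) + (σ + t (i-1)) • rot12 (u i) := by
        rw [hxeq, hvi]
        module
      rw [hi1, hxw, hvi]
      exact seg_mem12 _ _ _ _ hσge (by linarith)
  -- measure of frontier P
  have hedist1 : ∀ i, edist (v i) (w i) = ENNReal.ofReal (s i) := by
    intro i
    rw [edist_dist, dist_eq_norm]
    have : v i - w i = -(s i • rot12 (u i)) := by
      simp only [hwdef]
      abel
    rw [this, norm_neg, norm_smul, norm_rot12, hunorm, mul_one, Real.norm_eq_abs,
      abs_of_nonneg (hs0 i)]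
  have hedist2 : ∀ i, edist (w i) (v (i+1)) = ENNReal.ofReal (t i) := by
    intro i
    rw [edist_dist, dist_eq_norm]
    have : w i - v (i+1) = -(t i • rot12 (u (i+1))) := by
      rw [htv i]
      abel
    rw [this, norm_neg, norm_smul, norm_rot12, hunorm, mul_one, Real.norm_eq_abs,
      abs_of_nonneg (ht0 i)]
  have hμP : μH[1] (frontier P) ≤ ∑ i : Fin n, (ENNReal.ofReal (s i) + ENNReal.ofReal (t i)) := by
    calc μH[1] (frontier P)
        ≤ μH[1] (⋃ i, (segment ℝ (v i) (w i) ∪ segment ℝ (w i) (v (i+1)))) :=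
          measure_mono hfront
      _ ≤ ∑' i : Fin n, μH[1] (segment ℝ (v i) (w i) ∪ segment ℝ (w i) (v (i+1))) :=
          measure_iUnion_le _
      _ = ∑ i : Fin n, μH[1] (segment ℝ (v i) (w i) ∪ segment ℝ (w i) (v (i+1))) :=
          tsum_fintype _
      _ ≤ ∑ i : Fin n, (ENNReal.ofReal (s i) + ENNReal.ofReal (t i)) := by
          apply Finset.sum_le_sum
          intro i _
          calc μH[1] (segment ℝ (v i) (w i) ∪ segment ℝ (w i) (v (i+1)))
              ≤ μH[1] (segment ℝ (v i) (w i)) + μH[1] (segment ℝ (w i) (v (i+1))) :=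
                measure_union_le _ _
            _ = ENNReal.ofReal (s i) + ENNReal.ofReal (t i) := by
                rw [hausdorffMeasure_segment, hausdorffMeasure_segment,
                  hedist1 i, hedist2 i]
  -- projection: frontier K is a 1-Lipschitz image of frontier P
  obtain ⟨p, hlip, huniq⟩ := exists_proj12 K hKne hKcl hKconv
  have hsurj : frontier K ⊆ p '' frontier P := by
    intro y hy
    have hyK : y ∈ K := hKcl.frontier_subset hy
    obtain ⟨wv, hwv0, hwvs⟩ := exists_support12 K hKconv hKint hy
    obtain ⟨i₀, hi₀⟩ := covering12 n hn u hu wv hwv0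
    have hwvpos : 0 < ‖wv‖ := norm_pos_iff.mpr hwv0
    have hipos : 0 < ⟪wv, u i₀⟫ := lt_of_lt_of_le (by positivity) hi₀
    set T := {τ : ℝ | 0 ≤ τ ∧ y + τ • wv ∈ P} with hTdef
    have hTne : T.Nonempty := ⟨0, le_refl 0, by simpa using hKP hyK⟩
    have hTbdd : BddAbove T := by
      refine ⟨max 0 ((c i₀ - ⟪y, u i₀⟫) / ⟪wv, u i₀⟫), fun τ hτ => ?_⟩
      obtain ⟨hτ0, hτP⟩ := hτ
      have h1 := hτP i₀
      rw [inner_add_left, real_inner_smul_left] at h1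
      have h2 : τ ≤ (c i₀ - ⟪y, u i₀⟫) / ⟪wv, u i₀⟫ := by
        rw [le_div_iff₀ hipos]
        linarith
      exact le_max_of_le_right h2
    have hTcl : IsClosed T := by
      have hTeq : T = {τ : ℝ | 0 ≤ τ} ∩ (fun τ : ℝ => y + τ • wv) ⁻¹' P := by
        ext τ; simp [hTdef, Set.mem_inter_iff]
      rw [hTeq]
      exact (isClosed_le continuous_const continuous_id).inter
        (hPcl.preimage (continuous_const.add (continuous_id.smul continuous_const)))
    set τs := sSup T with hτs
    have hmem : τs ∈ T := hTcl.csSup_mem hTne hTbdd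
    set z := y + τs • wv with hzdef
    have hzP : z ∈ P := hmem.2
    have hzint : z ∉ interior P := by
      intro hzin
      rcases Metric.isOpen_iff.mp isOpen_interior z hzin with ⟨ε, hε, hball⟩
      set δ := ε / (2 * ‖wv‖) with hδdef
      have hδpos : 0 < δ := by positivity
      have hz2 : y + (τs + δ) • wv ∈ Metric.ball z ε := by
        rw [Metric.mem_ball, dist_eq_norm]
        have he : y + (τs + δ) • wv - z = δ • wv := by
          rw [hzdef, add_smul]
          abel
        rw [he, norm_smul, Real.norm_eq_abs, abs_of_pos hδpos, hδdef]
        have heq : ε / (2 * ‖wv‖) * ‖wv‖ = ε / 2 := by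
          field_simp
        rw [heq]
        linarith
      have hz3 : τs + δ ∈ T := by
        refine ⟨by linarith [hmem.1], ?_⟩
        exact interior_subset (hball hz2)
      have := le_csSup hTbdd hz3
      linarith
    have hzfront : z ∈ frontier P := by
      rw [frontier, Set.mem_diff]
      exact ⟨subset_closure hzP, hzint⟩
    refine ⟨z, hzfront, ?_⟩
    apply huniq z y hyK
    intro x hx
    have he : z - y = τs • wv := by rw [hzdef]; abel
    rw [he, real_inner_smul_left]
    have h1 : ⟪wv, x - y⟫ ≤ 0 := by
      rw [inner_sub_right]
      have := hwvs x hx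
      rw [real_inner_comm x wv, real_inner_comm y wv]
      linarith
    exact mul_nonpos_of_nonneg_of_nonpos hmem.1 h1
  have hK_P : μH[1] (frontier K) ≤ μH[1] (frontier P) := by
    calc μH[1] (frontier K) ≤ μH[1] (p '' frontier P) := measure_mono hsurj
      _ ≤ (1:NNReal) ^ (1:ℝ) * μH[1] (frontier P) :=
          hlip.hausdorffMeasure_image_le (by norm_num) _
      _ = μH[1] (frontier P) := by simp
  -- chord bound
  have hchord : ∀ i, (s i + t i) * Real.cos (π/n) ≤ dist (v i) (v (i+1)) := by
    intro i
    have he : v (i+1) - v i = s i • rot12 (u i) + t i • rot12 (u (i+1)) := by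
      rw [htv i]
      simp only [hwdef]
      abel
    rw [dist_eq_norm']
    rw [he]
    apply trig_ineq12 n hn _ _ (by rw [norm_rot12]; exact hunorm i)
      (by rw [norm_rot12]; exact hunorm (i+1)) _ _ _ (hs0 i) (ht0 i)
    rw [inner_rot_rot12]
    exact (hadj i).1
  -- put it together
  refine hK_P.trans (hμP.trans ?_)
  have hsum : ∑ i : Fin n, (ENNReal.ofReal (s i) + ENNReal.ofReal (t i))
      = ENNReal.ofReal (∑ i : Fin n, (s i + t i)) := by
    rw [ENNReal.ofReal_sum_of_nonneg (fun i _ => add_nonneg (hs0 i) (ht0 i))]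
    congr 1
    ext i
    rw [ENNReal.ofReal_add (hs0 i) (ht0 i)]
  rw [hsum]
  apply ENNReal.ofReal_le_ofReal
  rw [le_div_iff₀ hcpos, Finset.sum_mul]
  exact Finset.sum_le_sum fun i _ => hchord i
end

section
/- For the rectangle [0, L] × [0, 1] with L > 0 and any n points on its boundary, there exists a polygonal path passing through all n points of total length at most L + 2n + 2. -/
/-!
Sort the points by their first coordinate. Each segment of the resulting path is at most its
horizontal extent plus its vertical extent, which is at most `1`; the horizontal extents
telescope to at most `L`, so the path has length at most `L + (n - 1)`.
-/

open Finset

lemma EuclideanSpace.dist_le_sum_dist {𝕜 ι : Type*} [RCLike 𝕜] [Fintype ι]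
    (x y : EuclideanSpace 𝕜 ι) : dist x y ≤ ∑ i, dist (x i) (y i) := by
  rw [EuclideanSpace.dist_eq]
  exact Real.sqrt_le_iff.2 ⟨by positivity, sum_sq_le_sq_sum_of_nonneg fun _ _ => dist_nonneg⟩

lemma Fin.sum_univ_succ_sub_castSucc {M : Type*} [AddCommGroup M] {m : ℕ}
    (f : Fin (m + 1) → M) :
    ∑ i : Fin m, (f i.succ - f i.castSucc) = f (Fin.last m) - f 0 := by
  induction m with
  | zero => simp
  | succ m ih =>
    rw [Fin.sum_univ_castSucc]
    simp_rw [Fin.succ_castSucc]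
    rw [ih fun i => f i.castSucc, Fin.succ_last]
    simp

lemma Fin.sum_dite_succ_lt {M : Type*} [AddCommMonoid M] {m : ℕ}
    (f : Fin (m + 1) → Fin (m + 1) → M) :
    (∑ i : Fin (m + 1), if h : (i : ℕ) + 1 < m + 1 then f i ⟨(i : ℕ) + 1, h⟩ else 0) =
      ∑ i : Fin m, f i.castSucc i.succ := by
  rw [Fin.sum_univ_castSucc]
  simp [Fin.succ]

lemma dist_le_sub_add_of_fst_le {x y : EuclideanSpace ℝ (Fin 2)} {a b : ℝ}
    (hxy : x 0 ≤ y 0) (hx : x 1 ∈ Set.Icc a b) (hy : y 1 ∈ Set.Icc a b) :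
    dist x y ≤ y 0 - x 0 + (b - a) := by
  calc dist x y ≤ dist (x 0) (y 0) + dist (x 1) (y 1) := by
        simpa only [Fin.sum_univ_two] using EuclideanSpace.dist_le_sum_dist x y
    _ ≤ y 0 - x 0 + (b - a) := by
        rw [Real.dist_eq, abs_sub_comm, abs_of_nonneg (sub_nonneg.2 hxy)]
        gcongr
        exact Real.dist_le_of_mem_Icc hx hy

lemma sum_dist_le_of_monotone_fst {m : ℕ} {a b : ℝ}
    (q : Fin (m + 1) → EuclideanSpace ℝ (Fin 2))
    (hmono : Monotone fun i => q i 0) (hq : ∀ i, q i 1 ∈ Set.Icc a b) :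
    ∑ i : Fin m, dist (q i.castSucc) (q i.succ) ≤ q (Fin.last m) 0 - q 0 0 + m * (b - a) := by
  calc ∑ i : Fin m, dist (q i.castSucc) (q i.succ)
      ≤ ∑ i : Fin m, ((q i.succ 0 - q i.castSucc 0) + (b - a)) :=
        sum_le_sum fun i _ =>
          dist_le_sub_add_of_fst_le (hmono (Fin.castSucc_le_succ i)) (hq _) (hq _)
    _ = q (Fin.last m) 0 - q 0 0 + m * (b - a) := by
        rw [sum_add_distrib, Fin.sum_univ_succ_sub_castSucc fun i => q i 0]
        simp [mul_sub]

/-- For the rectangle `[0, L] × [0, 1]` (`L > 0`) and any `n` points on its boundary,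
there is an ordering of the points (a permutation `σ`) such that the polygonal path
through them in this order has total length at most `L + 2n + 2`. -/
theorem stmt14 (L : ℝ) (hL : 0 < L) (n : ℕ)
    (p : Fin n → EuclideanSpace ℝ (Fin 2))
    (hp : ∀ i, p i ∈ frontier {x : EuclideanSpace ℝ (Fin 2) |
      x 0 ∈ Set.Icc 0 L ∧ x 1 ∈ Set.Icc (0 : ℝ) 1}) :
    ∃ σ : Equiv.Perm (Fin n),
      (∑ i : Fin n, if h : (i : ℕ) + 1 < n
        then dist (p (σ i)) (p (σ ⟨(i : ℕ) + 1, h⟩)) else 0) ≤ L + 2 * n + 2 := by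
  have hrect : ∀ i, p i 0 ∈ Set.Icc 0 L ∧ p i 1 ∈ Set.Icc (0 : ℝ) 1 := fun i =>
    IsClosed.frontier_subset
      ((isClosed_Icc.preimage (by fun_prop)).inter (isClosed_Icc.preimage (by fun_prop))) (hp i)
  cases n with
  | zero => exact ⟨1, by simp only [univ_eq_empty, sum_empty, CharP.cast_eq_zero]; linarith⟩
  | succ m =>
    let σ := Tuple.sort fun i => p i 0
    refine ⟨σ, ?_⟩
    rw [Fin.sum_dite_succ_lt fun i j => dist (p (σ i)) (p (σ j))]
    calc ∑ i : Fin m, dist (p (σ i.castSucc)) (p (σ i.succ))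
        ≤ p (σ (Fin.last m)) 0 - p (σ 0) 0 + m * (1 - 0) :=
          sum_dist_le_of_monotone_fst (p ∘ σ) (Tuple.monotone_sort fun i => p i 0)
            fun i => (hrect _).2
      _ ≤ L + 2 * ↑(m + 1) + 2 := by
          have hlast := (hrect (σ (Fin.last m))).1.2
          have hfirst := (hrect (σ 0)).1.1
          push_cast
          linarith
end

section
/- Let a, b, m' be points with m' on a circular arc with endpoints a and b, where the arc subtends an inscribed angle φ ≤ π at m' (so the angle ∠a m' b = φ is constant along the arc). Then |am'| + |m'b| is maximized exactly when m' is the midpoint of the arc. -/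
/-!
Put the centre at the origin and use coordinates along the unit normal `n` of the chord and a
perpendicular unit vector `e`. The endpoints of the chord are `(h, p)` and `(h, -p)`, a point of
the arc is `(y, q)` with `h ≤ y ≤ R`, and then `|ax|² + |xb|² = 4R² - 4hy` and
`|ax| |xb| = 2R (y - h)`. Hence `(|ax| + |xb|)² = 4 (R - h) (R + y)`, strictly increasing in the
height `y`, and the midpoint of the arc is the only point of the circle at height `R`.
-/

open Metric Module
open scoped RealInnerProductSpace

variable {V : Type*} [NormedAddCommGroup V] [InnerProductSpace ℝ V]

theorem exists_inner_eq_inner_mul_inner_add_inner_mul_inner [Fact (finrank ℝ V = 2)] {n : V}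
    (hn : ‖n‖ = 1) : ∃ e : V, ∀ v w : V, ⟪v, w⟫ = ⟪n, v⟫ * ⟪n, w⟫ + ⟪e, v⟫ * ⟪e, w⟫ := by
  have : FiniteDimensional ℝ V := .of_fact_finrank_eq_two
  let 𝔬 : Orientation ℝ V (Fin 2) := (finBasisOfFinrankEq ℝ V Fact.out).orientation
  refine ⟨𝔬.rightAngleRotation n, fun v w => ?_⟩
  simpa [𝔬.inner_rightAngleRotation_left, hn] using
    (𝔬.inner_mul_inner_add_areaForm_mul_areaForm n v w).symm

section Coordinates

variable {n e a b m x : V} {R : ℝ}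

theorem eq_of_inner_eq_of_inner_eq (he : ∀ v w : V, ⟪v, w⟫ = ⟪n, v⟫ * ⟪n, w⟫ + ⟪e, v⟫ * ⟪e, w⟫)
    {v w : V} (hnvw : ⟪n, v⟫ = ⟪n, w⟫) (hevw : ⟪e, v⟫ = ⟪e, w⟫) : v = w := by
  rw [← sub_eq_zero, ← inner_self_eq_zero (𝕜 := ℝ), he, inner_sub_right, inner_sub_right, hnvw,
    hevw]
  ring

theorem norm_sq_eq_inner_sq_add_inner_sq
    (he : ∀ v w : V, ⟪v, w⟫ = ⟪n, v⟫ * ⟪n, w⟫ + ⟪e, v⟫ * ⟪e, w⟫) (v : V) :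
    ‖v‖ ^ 2 = ⟪n, v⟫ ^ 2 + ⟪e, v⟫ ^ 2 := by
  rw [← real_inner_self_eq_norm_sq, he]
  ring

theorem norm_sub_sq_eq_of_norm_eq (he : ∀ v w : V, ⟪v, w⟫ = ⟪n, v⟫ * ⟪n, w⟫ + ⟪e, v⟫ * ⟪e, w⟫)
    (ha : ‖a‖ = R) (hx : ‖x‖ = R) :
    ‖a - x‖ ^ 2 = 2 * R ^ 2 - 2 * (⟪n, a⟫ * ⟪n, x⟫ + ⟪e, a⟫ * ⟪e, x⟫) := by
  rw [norm_sub_sq_real, ha, hx, he]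
  ring

theorem inner_eq_neg_of_chord (he : ∀ v w : V, ⟪v, w⟫ = ⟪n, v⟫ * ⟪n, w⟫ + ⟪e, v⟫ * ⟪e, w⟫)
    (ha : ‖a‖ = R) (hb : ‖b‖ = R) (hab : a ≠ b) (hnab : ⟪n, a⟫ = ⟪n, b⟫) :
    ⟪e, b⟫ = -⟪e, a⟫ := by
  have hsq : ⟪e, b⟫ ^ 2 = ⟪e, a⟫ ^ 2 := by
    have hA := norm_sq_eq_inner_sq_add_inner_sq he a
    have hB := norm_sq_eq_inner_sq_add_inner_sq he b
    rw [ha] at hA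
    rw [hb, ← hnab] at hB
    linarith
  have hne : ⟪e, b⟫ ≠ ⟪e, a⟫ := fun h => hab (eq_of_inner_eq_of_inner_eq he hnab h.symm)
  exact (sq_eq_sq_iff_eq_or_eq_neg.mp hsq).resolve_left hne

theorem norm_sub_sq_eq_of_chord (he : ∀ v w : V, ⟪v, w⟫ = ⟪n, v⟫ * ⟪n, w⟫ + ⟪e, v⟫ * ⟪e, w⟫)
    (ha : ‖a‖ = R) (hb : ‖b‖ = R) (hab : a ≠ b) (hnab : ⟪n, a⟫ = ⟪n, b⟫) (hx : ‖x‖ = R) :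
    ‖x - b‖ ^ 2 = 2 * R ^ 2 - 2 * (⟪n, a⟫ * ⟪n, x⟫ - ⟪e, a⟫ * ⟪e, x⟫) := by
  rw [norm_sub_rev, norm_sub_sq_eq_of_norm_eq he hb hx, ← hnab,
    inner_eq_neg_of_chord he ha hb hab hnab]
  ring

theorem norm_sub_mul_norm_sub_eq_of_chord
    (he : ∀ v w : V, ⟪v, w⟫ = ⟪n, v⟫ * ⟪n, w⟫ + ⟪e, v⟫ * ⟪e, w⟫)
    (ha : ‖a‖ = R) (hb : ‖b‖ = R) (hab : a ≠ b) (hnab : ⟪n, a⟫ = ⟪n, b⟫) (hx : ‖x‖ = R)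
    (hxa : ⟪n, a⟫ ≤ ⟪n, x⟫) :
    ‖a - x‖ * ‖x - b‖ = 2 * R * (⟪n, x⟫ - ⟪n, a⟫) := by
  have hR : 0 ≤ R := ha ▸ norm_nonneg a
  have hA := norm_sq_eq_inner_sq_add_inner_sq he a
  have hX := norm_sq_eq_inner_sq_add_inner_sq he x
  rw [ha] at hA
  rw [hx] at hX
  rw [← sq_eq_sq₀ (by positivity) (mul_nonneg (by positivity) (sub_nonneg.mpr hxa)), mul_pow,
    norm_sub_sq_eq_of_norm_eq he ha hx, norm_sub_sq_eq_of_chord he ha hb hab hnab hx]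
  linear_combination (4 * (R ^ 2 - ⟪n, x⟫ ^ 2)) * hA + 4 * ⟪e, a⟫ ^ 2 * hX

theorem norm_sub_add_norm_sub_sq_of_chord
    (he : ∀ v w : V, ⟪v, w⟫ = ⟪n, v⟫ * ⟪n, w⟫ + ⟪e, v⟫ * ⟪e, w⟫)
    (ha : ‖a‖ = R) (hb : ‖b‖ = R) (hab : a ≠ b) (hnab : ⟪n, a⟫ = ⟪n, b⟫) (hx : ‖x‖ = R)
    (hxa : ⟪n, a⟫ ≤ ⟪n, x⟫) :
    (‖a - x‖ + ‖x - b‖) ^ 2 = 4 * (R - ⟪n, a⟫) * (R + ⟪n, x⟫) := by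
  linear_combination norm_sub_sq_eq_of_norm_eq he ha hx
    + norm_sub_sq_eq_of_chord he ha hb hab hnab hx
    + 2 * norm_sub_mul_norm_sub_eq_of_chord he ha hb hab hnab hx hxa

theorem inner_eq_of_norm_sub_eq_norm_sub
    (he : ∀ v w : V, ⟪v, w⟫ = ⟪n, v⟫ * ⟪n, w⟫ + ⟪e, v⟫ * ⟪e, w⟫)
    (ha : ‖a‖ = R) (hb : ‖b‖ = R) (hab : a ≠ b) (hnab : ⟪n, a⟫ = ⟪n, b⟫) (hx : ‖x‖ = R)
    (hxa : ⟪n, a⟫ < ⟪n, x⟫) (hxab : ‖a - x‖ = ‖x - b‖) :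
    ⟪n, x⟫ = R := by
  have hA := norm_sq_eq_inner_sq_add_inner_sq he a
  have hX := norm_sq_eq_inner_sq_add_inner_sq he x
  rw [ha] at hA
  rw [hx] at hX
  have hea : ⟪e, a⟫ ≠ 0 := fun h => hab <| eq_of_inner_eq_of_inner_eq he hnab <| by
    rw [inner_eq_neg_of_chord he ha hb hab hnab, h, neg_zero]
  have hex : ⟪e, x⟫ = 0 := by
    have := congrArg (· ^ 2) hxab
    simp only [norm_sub_sq_eq_of_norm_eq he ha hx, norm_sub_sq_eq_of_chord he ha hb hab hnab hx]
      at this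
    exact (mul_eq_zero.mp (by linarith)).resolve_left hea
  have hR : 0 ≤ R := ha ▸ norm_nonneg a
  have hRa : -R ≤ ⟪n, a⟫ := (abs_le.mp (abs_le_of_sq_le_sq (by nlinarith) hR)).1
  have hfactor : (⟪n, x⟫ - R) * (⟪n, x⟫ + R) = 0 := by linear_combination -hX - ⟪e, x⟫ * hex
  exact sub_eq_zero.mp ((mul_eq_zero.mp hfactor).resolve_right (by linarith))

theorem eq_of_inner_eq_norm (he : ∀ v w : V, ⟪v, w⟫ = ⟪n, v⟫ * ⟪n, w⟫ + ⟪e, v⟫ * ⟪e, w⟫)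
    {v w : V} (hv : ‖v‖ = R) (hw : ‖w‖ = R) (hnv : ⟪n, v⟫ = R) (hnw : ⟪n, w⟫ = R) : v = w := by
  have hev := norm_sq_eq_inner_sq_add_inner_sq he v
  have hew := norm_sq_eq_inner_sq_add_inner_sq he w
  rw [hv, hnv, left_eq_add, pow_eq_zero_iff two_ne_zero] at hev
  rw [hw, hnw, left_eq_add, pow_eq_zero_iff two_ne_zero] at hew
  exact eq_of_inner_eq_of_inner_eq he (hnv.trans hnw.symm) (hev.trans hew.symm)

theorem norm_sub_add_norm_sub_le_of_chord
    (he : ∀ v w : V, ⟪v, w⟫ = ⟪n, v⟫ * ⟪n, w⟫ + ⟪e, v⟫ * ⟪e, w⟫)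
    (ha : ‖a‖ = R) (hb : ‖b‖ = R) (hab : a ≠ b) (hnab : ⟪n, a⟫ = ⟪n, b⟫)
    (hm : ‖m‖ = R) (hma : ⟪n, a⟫ < ⟪n, m⟫) (hmab : ‖a - m‖ = ‖m - b‖)
    (hx : ‖x‖ = R) (hxa : ⟪n, a⟫ ≤ ⟪n, x⟫) :
    ‖a - x‖ + ‖x - b‖ ≤ ‖a - m‖ + ‖m - b‖ ∧
      (‖a - x‖ + ‖x - b‖ = ‖a - m‖ + ‖m - b‖ ↔ x = m) := by
  have hR : 0 ≤ R := ha ▸ norm_nonneg a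
  have hmR := inner_eq_of_norm_sub_eq_norm_sub he ha hb hab hnab hm hma hmab
  have hxR : ⟪n, x⟫ ≤ R :=
    (abs_le.mp (abs_le_of_sq_le_sq (by nlinarith [norm_sq_eq_inner_sq_add_inner_sq he x]) hR)).2
  have haR : 0 < R - ⟪n, a⟫ := by linarith
  have hSx := norm_sub_add_norm_sub_sq_of_chord he ha hb hab hnab hx hxa
  have hSm := norm_sub_add_norm_sub_sq_of_chord he ha hb hab hnab hm hma.le
  rw [hmR] at hSm
  refine ⟨?_, ⟨fun hS => ?_, fun hxm => hxm ▸ rfl⟩⟩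
  · rw [← pow_le_pow_iff_left₀ (by positivity) (by positivity) two_ne_zero, hSx, hSm]
    gcongr
  · have hxtop : ⟪n, x⟫ = R := by
      have hS2 := congrArg (· ^ 2) hS
      simp only [hSx, hSm] at hS2
      linarith [mul_left_cancel₀ (by positivity) hS2]
    exact eq_of_inner_eq_norm he hx hm hxtop hmR

end Coordinates

theorem stmt15_general (o : EuclideanSpace ℝ (Fin 2)) (R : ℝ)
    (a b : EuclideanSpace ℝ (Fin 2)) (ha : a ∈ sphere o R) (hb : b ∈ sphere o R)
    (hab : a ≠ b)
    (u : EuclideanSpace ℝ (Fin 2)) (hu : u ≠ 0) (huab : ⟪u, a⟫ = ⟪u, b⟫)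
    (m : EuclideanSpace ℝ (Fin 2)) (hm : m ∈ sphere o R)
    (hmside : ⟪u, a⟫ < ⟪u, m⟫) (hmmid : dist a m = dist m b) :
    ∀ m' ∈ sphere o R, ⟪u, a⟫ ≤ ⟪u, m'⟫ →
      dist a m' + dist m' b ≤ dist a m + dist m b ∧
        (dist a m' + dist m' b = dist a m + dist m b ↔ m' = m) := by
  intro m' hm' hside
  have : Fact (finrank ℝ (EuclideanSpace ℝ (Fin 2)) = 2) := ⟨finrank_euclideanSpace_fin⟩
  have hu_pos : 0 < ‖u‖ := norm_pos_iff.mpr hu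
  have hn : ‖‖u‖⁻¹ • u‖ = 1 := by rw [norm_smul, norm_inv, norm_norm, inv_mul_cancel₀ hu_pos.ne']
  obtain ⟨e, he⟩ := exists_inner_eq_inner_mul_inner_add_inner_mul_inner hn
  have height (x) : ⟪‖u‖⁻¹ • u, x - o⟫ = ‖u‖⁻¹ * (⟪u, x⟫ - ⟪u, o⟫) := by
    rw [real_inner_smul_left, inner_sub_right]
  have key := norm_sub_add_norm_sub_le_of_chord he (mem_sphere_iff_norm.mp ha)
    (mem_sphere_iff_norm.mp hb) (sub_left_injective.ne hab) (by rw [height, height, huab])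
    (mem_sphere_iff_norm.mp hm) (by rw [height, height]; gcongr)
    (by simpa only [sub_sub_sub_cancel_right, ← dist_eq_norm] using hmmid)
    (mem_sphere_iff_norm.mp hm') (by rw [height, height]; gcongr)
  simpa only [sub_sub_sub_cancel_right, ← dist_eq_norm, sub_left_inj] using key

/-- Let `a ≠ b` lie on a circle with center `o` and radius `R`, and consider the arc of
the circle cut off by the chord `ab` on the side `{x : ⟪u, x⟫ ≥ ⟪u, a⟫}` of the chord
line (where `u` is a normal direction of the chord line, `⟪u, a⟫ = ⟪u, b⟫`). Let `m` be
the midpoint of this arc (the point of the arc equidistant from `a` and `b`). Then for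
every point `m'` of the arc, `|am'| + |m'b| ≤ |am| + |mb|`, with equality iff
`m' = m`. -/
theorem stmt15 (o : EuclideanSpace ℝ (Fin 2)) (R : ℝ) (hR : 0 < R)
    (a b : EuclideanSpace ℝ (Fin 2)) (ha : a ∈ sphere o R) (hb : b ∈ sphere o R)
    (hab : a ≠ b)
    (u : EuclideanSpace ℝ (Fin 2)) (hu : u ≠ 0) (huab : ⟪u, a⟫ = ⟪u, b⟫)
    (m : EuclideanSpace ℝ (Fin 2)) (hm : m ∈ sphere o R)
    (hmside : ⟪u, a⟫ < ⟪u, m⟫) (hmmid : dist a m = dist m b) :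
    ∀ m' ∈ sphere o R, ⟪u, a⟫ ≤ ⟪u, m'⟫ →
      dist a m' + dist m' b ≤ dist a m + dist m b ∧
        (dist a m' + dist m' b = dist a m + dist m b ↔ m' = m) :=
  stmt15_general o R a b ha hb hab u hu huab m hm hmside hmmid
end

section
/- Let abc be an equilateral triangle of side 1, and let d and d' be points such that abcd and abcd' are convex deltoids (kites) symmetric about the line through b and the midpoint of ac, with ∠adc = 150° and ∠ad'c = 120°, and abcd ⊆ abcd'. Then per(abcd) − diam(abcd) > per(abcd') − diam(abcd'); in particular the functional K ↦ per K − diam K is not monotone under inclusion of convex sets. -/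
/-!
If `|ab| = |bc| = |ca| = 1` and `|ad| = |cd| = r`, the diagonals of the kite `abcd` meet at the
midpoint `m` of `ac`, since `bd` lies on the perpendicular bisector of `ac`. Hence
`|bd| = |bm| + |md| = √3/2 + √(r² - 1/4)` and `per - diam = 2 + 2r - √3/2 - √(r² - 1/4)`.
The law of cosines at the apex gives `r² = 2 - √3` for the angle `150°`, where `|bd| = 1` and
`per - diam = 1 + 2r > 2`, and `r = √3/3` for the angle `120°`, where `per - diam = 2`.
-/

open EuclideanGeometry Real

section NormedSpace

variable {E : Type*} [NormedAddCommGroup E] [NormedSpace ℝ E]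

lemma eq_midpoint_of_mem_segment_of_dist_eq {a c p : E} (hp : p ∈ segment ℝ a c)
    (h : dist p a = dist p c) : p = midpoint ℝ a c := by
  rcases eq_or_ne a c with rfl | hac
  · simpa using hp
  rw [segment_eq_image_lineMap] at hp
  obtain ⟨t, ⟨ht0, ht1⟩, rfl⟩ := hp
  have hpos : 0 < dist a c := dist_pos.2 hac
  rw [dist_lineMap_left, dist_lineMap_right, Real.norm_of_nonneg ht0,
    Real.norm_of_nonneg (sub_nonneg.2 ht1)] at h
  have ht : t = 1 / 2 := by nlinarith
  rw [ht, one_div, midpoint]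
  rfl

end NormedSpace

section InnerProductSpace

variable {V P : Type*} [NormedAddCommGroup V] [InnerProductSpace ℝ V] [MetricSpace P]
  [NormedAddTorsor V P]

lemma dist_midpoint_sq_of_dist_eq {a c x : P} (hx : dist x a = dist x c) :
    dist x (midpoint ℝ a c) ^ 2 = dist x a ^ 2 - (dist a c / 2) ^ 2 := by
  have := dist_sq_add_dist_sq_eq_two_mul_dist_midpoint_sq_add_half_dist_sq x a c
  rw [← hx] at this
  linarith

lemma dist_sq_eq_of_dist_eq_of_angle {a c d : P} (h : dist a d = dist c d) :
    dist a c ^ 2 = 2 * dist a d ^ 2 * (1 - cos (∠ a d c)) := by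
  have := dist_sq_eq_dist_sq_add_dist_sq_sub_two_mul_dist_mul_dist_mul_cos_angle a d c
  rw [← h] at this
  linear_combination this

end InnerProductSpace

section Kite

variable {E : Type*} [NormedAddCommGroup E] [InnerProductSpace ℝ E]

lemma dist_eq_dist_midpoint_add_of_segment_inter_nonempty {a b c d : E}
    (hb : dist b a = dist b c) (hd : dist d a = dist d c)
    (hcross : (segment ℝ a c ∩ segment ℝ b d).Nonempty) :
    dist b d = dist b (midpoint ℝ a c) + dist (midpoint ℝ a c) d := by
  obtain ⟨p, hpac, hpbd⟩ := hcross
  have hbd : segment ℝ b d ⊆ (AffineSubspace.perpBisector a c : Set E) :=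
    (AffineSubspace.perpBisector a c).convex.segment_subset
      (AffineSubspace.mem_perpBisector_iff_dist_eq.2 hb)
      (AffineSubspace.mem_perpBisector_iff_dist_eq.2 hd)
  have hp : p = midpoint ℝ a c := eq_midpoint_of_mem_segment_of_dist_eq hpac
    (AffineSubspace.mem_perpBisector_iff_dist_eq.1 (hbd hpbd))
  subst hp
  exact (dist_add_dist_of_mem_segment hpbd).symm

lemma per_sub_diam_of_kite {a b c d : E}
    (hab : dist a b = 1) (hbc : dist b c = 1) (hca : dist c a = 1)
    (hkite : dist a d = dist c d) (hcross : (segment ℝ a c ∩ segment ℝ b d).Nonempty) :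
    (dist a b + dist b c + dist c d + dist d a) - dist b d =
      2 + 2 * dist a d - (√3 / 2 + √(dist a d ^ 2 - 1 / 4)) := by
  have hb : dist b a = dist b c := by rw [dist_comm, hab, hbc]
  have hd : dist d a = dist d c := by rw [dist_comm, hkite, dist_comm]
  have hac : dist a c = 1 := by rw [dist_comm, hca]
  have hbm : dist b (midpoint ℝ a c) = √3 / 2 := by
    rw [← sqrt_sq dist_nonneg, dist_midpoint_sq_of_dist_eq hb, dist_comm, hab, hac]
    rw [show (1 : ℝ) ^ 2 - (1 / 2) ^ 2 = 3 / 2 ^ 2 by norm_num, sqrt_div' _ (by norm_num),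
      sqrt_sq (by norm_num)]
  have hdm : dist (midpoint ℝ a c) d = √(dist a d ^ 2 - 1 / 4) := by
    rw [dist_comm, ← sqrt_sq dist_nonneg, dist_midpoint_sq_of_dist_eq hd, dist_comm d a, hac]
    norm_num
  rw [dist_eq_dist_midpoint_add_of_segment_inter_nonempty hb hd hcross, hbm, hdm, hab, hbc,
    ← hkite, dist_comm d a]
  ring

end Kite

theorem stmt16_general (a b c d d' : EuclideanSpace ℝ (Fin 2))
    (hab : dist a b = 1) (hbc : dist b c = 1) (hca : dist c a = 1)
    (hkite : dist a d = dist c d) (hkite' : dist a d' = dist c d')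
    (hd : ∠ a d c = 5 * π / 6) (hd' : ∠ a d' c = 2 * π / 3)
    (hcross : (segment ℝ a c ∩ segment ℝ b d).Nonempty)
    (hcross' : (segment ℝ a c ∩ segment ℝ b d').Nonempty) :
    (dist a b + dist b c + dist c d + dist d a) - dist b d >
      (dist a b + dist b c + dist c d' + dist d' a) - dist b d' := by
  have hac : dist a c = 1 := by rw [dist_comm, hca]
  have hs3 : √3 ^ 2 = 3 := sq_sqrt (by norm_num)
  have hs3_lt : √3 < 7 / 4 := by nlinarith [sqrt_nonneg 3]
  have hr : dist a d ^ 2 = 2 - √3 := by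
    have h := dist_sq_eq_of_dist_eq_of_angle hkite
    rw [hd, hac, show 5 * π / 6 = π - π / 6 by ring, cos_pi_sub, cos_pi_div_six] at h
    nlinarith
  have hr' : dist a d' = √3 / 3 := by
    have h := dist_sq_eq_of_dist_eq_of_angle hkite'
    rw [hd', hac, show 2 * π / 3 = π - π / 3 by ring, cos_pi_sub, cos_pi_div_three] at h
    nlinarith [dist_nonneg (x := a) (y := d'), sqrt_nonneg 3]
  have hm : √(dist a d ^ 2 - 1 / 4) = 1 - √3 / 2 := by
    rw [hr, show 2 - √3 - 1 / 4 = (1 - √3 / 2) ^ 2 by linear_combination -hs3 / 4,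
      sqrt_sq (by linarith)]
  have hm' : √(dist a d' ^ 2 - 1 / 4) = √3 / 6 := by
    rw [hr', show (√3 / 3) ^ 2 - 1 / 4 = (√3 / 6) ^ 2 by linear_combination hs3 / 12,
      sqrt_sq (by positivity)]
  have had : 1 / 2 < dist a d := by nlinarith [dist_nonneg (x := a) (y := d)]
  rw [gt_iff_lt, per_sub_diam_of_kite hab hbc hca hkite hcross,
    per_sub_diam_of_kite hab hbc hca hkite' hcross', hm, hm', hr']
  linarith

/-- Let `abc` be an equilateral triangle of side `1`, and let `d`, `d'` be points such
that `abcd` and `abcd'` are convex kites (in cyclic order, with the diagonals `ac` and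
`bd` resp. `bd'` crossing, and `|ad| = |cd|`, `|ad'| = |cd'|`), with `∠adc = 150°`,
`∠ad'c = 120°`, and `abcd ⊆ abcd'`. Then
`per(abcd) − diam(abcd) > per(abcd') − diam(abcd')` (the diameters being `|bd|` and
`|bd'|`), so `K ↦ per K − diam K` is not monotone under inclusion. -/
theorem stmt16 (a b c d d' : EuclideanSpace ℝ (Fin 2))
    (hab : dist a b = 1) (hbc : dist b c = 1) (hca : dist c a = 1)
    (hkite : dist a d = dist c d) (hkite' : dist a d' = dist c d')
    (hd : ∠ a d c = 5 * π / 6) (hd' : ∠ a d' c = 2 * π / 3)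
    (hcross : (segment ℝ a c ∩ segment ℝ b d).Nonempty)
    (hcross' : (segment ℝ a c ∩ segment ℝ b d').Nonempty)
    (hsub : convexHull ℝ {a, b, c, d} ⊆ convexHull ℝ {a, b, c, d'}) :
    (dist a b + dist b c + dist c d + dist d a) - dist b d >
      (dist a b + dist b c + dist c d' + dist d' a) - dist b d' :=
  stmt16_general a b c d d' hab hbc hca hkite hkite' hd hd' hcross hcross'
end

section
/- Let K be a compact convex set in the plane with diameter ab, |ab| = 2, midpoint o of ab, and let c, d be the intersections of the perpendicular bisector of ab with ∂K with |co| ≥ |do|. If |ad| < |cd|, then |ad| + |ac| > √5. -/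
/-!
Write `x = |do|`, `y = |co|`. Since `c` and `d` lie on the perpendicular bisector of `ab`,
`|ad| = √(1 + x²)` and `|ac| = √(1 + y²)`, so Minkowski's inequality for the vectors
`(1, x)` and `(1, y)` gives `(|ad| + |ac|)² ≥ 4 + (x + y)² ≥ 4 + |cd|² > 4 + |ad|² ≥ 5`.
-/

open Metric EuclideanGeometry

lemma four_add_sq_add_le_sq_add {x y u v : ℝ} (hu : 0 ≤ u) (hv : 0 ≤ v)
    (hux : u ^ 2 = 1 + x ^ 2) (hvy : v ^ 2 = 1 + y ^ 2) :
    4 + (x + y) ^ 2 ≤ (u + v) ^ 2 := by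
  have hcs : (1 + x * y) ^ 2 ≤ (u * v) ^ 2 := by
    rw [mul_pow, hux, hvy]
    nlinarith [sq_nonneg (x - y)]
  have huv : 1 + x * y ≤ u * v :=
    (le_abs_self _).trans (abs_le_of_sq_le_sq hcs (mul_nonneg hu hv))
  nlinarith

lemma dist_sq_eq_dist_midpoint_sq_add_of_dist_eq {V P : Type*} [NormedAddCommGroup V]
    [InnerProductSpace ℝ V] [MetricSpace P] [NormedAddTorsor V P] {p a b : P}
    (h : dist p a = dist p b) :
    dist p a ^ 2 = dist p (midpoint ℝ a b) ^ 2 + (dist a b / 2) ^ 2 := by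
  have := dist_sq_add_dist_sq_eq_two_mul_dist_midpoint_sq_add_half_dist_sq p a b
  rw [← h] at this
  linarith

theorem stmt17_general
    (a b c d : EuclideanSpace ℝ (Fin 2))
    (hab : dist a b = 2)
    (o : EuclideanSpace ℝ (Fin 2)) (ho : o = midpoint ℝ a b)
    (hcbis : dist c a = dist c b) (hdbis : dist d a = dist d b)
    (hlt : dist a d < dist c d) :
    dist a d + dist a c > Real.sqrt 5 := by
  have had_sq : dist a d ^ 2 = 1 + dist d o ^ 2 := by
    rw [dist_comm, dist_sq_eq_dist_midpoint_sq_add_of_dist_eq hdbis, ← ho, hab]; ring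
  have hac_sq : dist a c ^ 2 = 1 + dist c o ^ 2 := by
    rw [dist_comm, dist_sq_eq_dist_midpoint_sq_add_of_dist_eq hcbis, ← ho, hab]; ring
  have hcd : dist c d ≤ dist d o + dist c o := by
    linarith [dist_triangle c o d, dist_comm o d]
  have had : 1 ≤ dist a d := by nlinarith [sq_nonneg (dist d o), dist_nonneg (x := a) (y := d)]
  rw [gt_iff_lt, Real.sqrt_lt' (by linarith [dist_nonneg (x := a) (y := c)])]
  calc (5 : ℝ) ≤ 4 + dist a d ^ 2 := by nlinarith
    _ < 4 + dist c d ^ 2 := by gcongr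
    _ ≤ 4 + (dist d o + dist c o) ^ 2 := by gcongr
    _ ≤ (dist a d + dist a c) ^ 2 :=
      four_add_sq_add_le_sq_add dist_nonneg dist_nonneg had_sq hac_sq

/-- Let `K` be a planar compact convex body with diameter `ab`, `|ab| = 2`, midpoint `o`
of `ab`, and let `c`, `d` be the intersections of the perpendicular bisector of `ab`
with `∂K`, with `|co| ≥ |do|`. If `|ad| < |cd|` then `|ad| + |ac| > √5`. -/
theorem stmt17 (K : Set (EuclideanSpace ℝ (Fin 2)))
    (hKc : IsCompact K) (hKconv : Convex ℝ K) (hKint : (interior K).Nonempty)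
    (a b c d : EuclideanSpace ℝ (Fin 2))
    (ha : a ∈ K) (hb : b ∈ K) (hab : dist a b = 2) (hdiam : diam K = 2)
    (o : EuclideanSpace ℝ (Fin 2)) (ho : o = midpoint ℝ a b)
    (hc : c ∈ frontier K) (hd : d ∈ frontier K)
    (hcbis : dist c a = dist c b) (hdbis : dist d a = dist d b)
    (hco : dist c o ≥ dist d o)
    (hlt : dist a d < dist c d) :
    dist a d + dist a c > Real.sqrt 5 :=
  stmt17_general a b c d hab o ho hcbis hdbis hlt
end

section
/- The perimeter of the ellipse with semi-axes 1 and k satisfies per = 4 + 2k² log(1/k) + O(k²) as k → 0⁺; in particular, for every C > 0 there exists k₀ > 0 such that per ≥ 4 + k² log(1/k) for all 0 < k < k₀. -/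
/-!
By the symmetries `t ↦ t + π` and `t ↦ π - t` the perimeter is four times the quarter arc
`∫₀^{π/2} √(sin² t + k² cos² t) dt`. On `[0, k]` the integrand is `O(k)`, so that piece is `O(k²)`.
On `[k, π/2]` the square root is squeezed between `s + k² c² / (2 (s + k))` and `s + k² c² / (2 s)`
(`s = sin t`, `c = cos t`); with `t ≤ sin t (1 + t)` and Jordan's inequality `sin t ≥ 2t/π` both
bounds are `sin t + k² / (2t) + O(k² + k³/t²)`, and `∫_k^{π/2} dt/t = log (π/(2k))` produces the
logarithmic term.
-/

open Real intervalIntegral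

theorem integral_zero_two_pi_eq_four_mul_of_symm {f : ℝ → ℝ} (hf : Continuous f)
    (hper : Function.Periodic f π) (hrefl : ∀ t, f (π - t) = f t) :
    ∫ t in 0..2 * π, f t = 4 * ∫ t in 0..π / 2, f t := by
  have hhalf : ∫ t in π / 2..π, f t = ∫ t in 0..π / 2, f t := by
    simpa [hrefl, show π - π / 2 = π / 2 by ring] using
      (integral_comp_sub_left f π (a := 0) (b := π / 2)).symm
  have htwo := hper.intervalIntegral_add_zsmul_eq 2 0 (hf.intervalIntegrable · ·)
  rw [zero_add, zero_add, ← integral_add_adjacent_intervals (hf.intervalIntegrable 0 (π / 2))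
    (hf.intervalIntegrable _ π), hhalf] at htwo
  rw [show 2 * π = (2 : ℤ) • π by simp, htwo]
  simp only [zsmul_eq_mul]
  push_cast
  ring

theorem integral_inv_sq_of_pos {a b : ℝ} (ha : 0 < a) (hb : 0 < b) :
    ∫ t in a..b, (t ^ 2)⁻¹ = a⁻¹ - b⁻¹ := by
  have h0 : (0 : ℝ) ∉ Set.uIcc a b := by
    rw [Set.mem_uIcc]; rintro (⟨h, -⟩ | ⟨h, -⟩) <;> linarith
  have := integral_zpow (a := a) (b := b) (n := -2) (Or.inr ⟨by norm_num, h0⟩)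
  simp only [zpow_neg, zpow_ofNat] at this
  rw [this]; norm_num; ring

theorem sqrt_sq_add_le_add_div {s a : ℝ} (hs : 0 < s) (ha : 0 ≤ a) :
    √(s ^ 2 + a) ≤ s + a / (2 * s) := by
  refine sqrt_le_iff.mpr ⟨by positivity, ?_⟩
  have : 2 * s * (a / (2 * s)) = a := by field_simp
  nlinarith [sq_nonneg (a / (2 * s))]

theorem add_div_le_sqrt_sq_add {s a k : ℝ} (hs : 0 ≤ s) (hk : 0 < k) (ha : 0 ≤ a)
    (hak : a ≤ k ^ 2) : s + a / (2 * (s + k)) ≤ √(s ^ 2 + a) := by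
  set x := a / (2 * (s + k))
  have hx : 2 * (s + k) * x = a := by simp only [x]; field_simp
  have hx0 : 0 ≤ x := by positivity
  have hxk : x ≤ k / 2 := by
    simp only [x]; rw [div_le_div_iff₀ (by positivity) two_pos]; nlinarith
  refine le_sqrt_of_sq_le ?_
  nlinarith [mul_le_mul_of_nonneg_left hxk hx0]

theorem one_div_sin_le_one_div_add_one {t : ℝ} (ht : 0 < t) (ht' : t ≤ π / 2) :
    1 / sin t ≤ 1 / t + 1 := by
  have hsin : 0 < sin t := sin_pos_of_pos_of_lt_pi ht (by linarith [pi_pos])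
  have hcube := sin_gt_sub_cube ht
  have hjordan := mul_le_sin ht.le ht'
  have h2pi : 2 / π * t ≤ 2 / π * (π / 2) := by gcongr
  rw [div_add_one ht.ne', div_le_div_iff₀ hsin ht]
  have : t / 6 ≤ 2 / π := by
    rw [div_le_div_iff₀ (by norm_num) pi_pos]; nlinarith [pi_gt_three, pi_lt_d2]
  nlinarith [mul_le_mul_of_nonneg_left hjordan (sq_nonneg t), sq_nonneg t]

theorem inv_sin_sq_le {t : ℝ} (ht : 0 < t) (ht' : t ≤ π / 2) :
    (sin t ^ 2)⁻¹ ≤ π ^ 2 / 4 * (t ^ 2)⁻¹ := by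
  have hjordan := mul_le_sin ht.le ht'
  calc (sin t ^ 2)⁻¹ ≤ ((2 / π * t) ^ 2)⁻¹ := by gcongr
    _ = π ^ 2 / 4 * (t ^ 2)⁻¹ := by field_simp; ring

noncomputable def ellipseSpeed (k t : ℝ) : ℝ := √(sin t ^ 2 + k ^ 2 * cos t ^ 2)

theorem continuous_ellipseSpeed (k : ℝ) : Continuous (ellipseSpeed k) := by
  unfold ellipseSpeed; fun_prop

theorem ellipseSpeed_periodic (k : ℝ) : Function.Periodic (ellipseSpeed k) π := by
  intro t; simp [ellipseSpeed, sin_add_pi, cos_add_pi]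

theorem ellipseSpeed_pi_sub (k t : ℝ) : ellipseSpeed k (π - t) = ellipseSpeed k t := by
  simp [ellipseSpeed, sin_pi_sub, cos_pi_sub]

theorem ellipseSpeed_le {k t : ℝ} (ht : 0 < t) (ht' : t ≤ π / 2) :
    ellipseSpeed k t ≤ sin t + k ^ 2 / 2 * (1 / t + 1) := by
  have hsin : 0 < sin t := sin_pos_of_pos_of_lt_pi ht (by linarith [pi_pos])
  calc ellipseSpeed k t ≤ sin t + k ^ 2 * cos t ^ 2 / (2 * sin t) :=
        sqrt_sq_add_le_add_div hsin (by positivity)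
    _ ≤ sin t + k ^ 2 / 2 * (1 / sin t) := by
        rw [mul_one_div, div_div]
        gcongr
        exact mul_le_of_le_one_right (sq_nonneg k) (cos_sq_le_one t)
    _ ≤ sin t + k ^ 2 / 2 * (1 / t + 1) := by
        gcongr; exact one_div_sin_le_one_div_add_one ht ht'

theorem le_ellipseSpeed {k t : ℝ} (hk : 0 < k) (ht : 0 < t) (ht' : t ≤ π / 2) :
    sin t + k ^ 2 / 2 * (1 / t - sin t - k * (π ^ 2 / 4 * (t ^ 2)⁻¹)) ≤ ellipseSpeed k t := by
  have hsin : 0 < sin t := sin_pos_of_pos_of_lt_pi ht (by linarith [pi_pos])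
  -- with `s = sin t`: `cos² t / (s + k) = 1/(s + k) - s²/(s + k)` and `1/(s + k) ≥ 1/s - k/s²`
  have hcos : 1 / t - sin t - k * (π ^ 2 / 4 * (t ^ 2)⁻¹) ≤ cos t ^ 2 / (sin t + k) := by
    have h1 : 1 / t ≤ 1 / sin t := one_div_le_one_div_of_le hsin (sin_le ht.le)
    have h2 : k * (sin t ^ 2)⁻¹ ≤ k * (π ^ 2 / 4 * (t ^ 2)⁻¹) := by
      gcongr; exact inv_sin_sq_le ht ht'
    have h3 : 1 / sin t - sin t - k * (sin t ^ 2)⁻¹ ≤ cos t ^ 2 / (sin t + k) := by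
      rw [cos_sq', le_div_iff₀ (by positivity)]
      field_simp
      nlinarith [pow_pos hsin 3, mul_pos hk hsin, mul_pos (mul_pos hk hk) hsin]
    linarith
  calc sin t + k ^ 2 / 2 * (1 / t - sin t - k * (π ^ 2 / 4 * (t ^ 2)⁻¹))
      ≤ sin t + k ^ 2 * cos t ^ 2 / (2 * (sin t + k)) := by
        rw [show k ^ 2 * cos t ^ 2 / (2 * (sin t + k)) = k ^ 2 / 2 * (cos t ^ 2 / (sin t + k)) by
          field_simp]
        gcongr
    _ ≤ ellipseSpeed k t :=
        add_div_le_sqrt_sq_add hsin.le hk (by positivity)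
          (mul_le_of_le_one_right (sq_nonneg k) (cos_sq_le_one t))

theorem ellipseSpeed_le_sqrt_two_mul {k t : ℝ} (hk : 0 ≤ k) (ht : 0 ≤ t) (htk : t ≤ k) :
    ellipseSpeed k t ≤ √2 * k := by
  have hsin : |sin t| ≤ k := (abs_sin_le_abs.trans (abs_of_nonneg ht).le).trans htk
  rw [show √2 * k = √(2 * k ^ 2) by rw [sqrt_mul zero_le_two, sqrt_sq hk]]
  refine sqrt_le_sqrt ?_
  nlinarith [sq_abs (sin t), abs_nonneg (sin t), cos_sq_le_one t, sq_nonneg k]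

section Integrals

variable {k : ℝ}

theorem integral_ellipseSpeed_le (hk : 0 < k) (hk' : k ≤ π / 2) :
    ∫ t in k..π / 2, ellipseSpeed k t ≤ cos k + k ^ 2 / 2 * (log (π / 2 / k) + (π / 2 - k)) := by
  have hne : ∀ t ∈ Set.uIcc k (π / 2), t ≠ 0 := fun t ht ↦ by
    rw [Set.uIcc_of_le hk'] at ht; exact (hk.trans_le ht.1).ne'
  have hinv : IntervalIntegrable (fun t : ℝ ↦ 1 / t) MeasureTheory.volume k (π / 2) :=
    intervalIntegrable_one_div hne continuousOn_id
  calc ∫ t in k..π / 2, ellipseSpeed k t ≤ ∫ t in k..π / 2, (sin t + k ^ 2 / 2 * (1 / t + 1)) :=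
        integral_mono_on hk' ((continuous_ellipseSpeed k).intervalIntegrable _ _)
          (intervalIntegrable_sin.add ((hinv.add intervalIntegrable_const).const_mul _))
          fun t ht ↦ ellipseSpeed_le (hk.trans_le ht.1) ht.2
    _ = cos k + k ^ 2 / 2 * (log (π / 2 / k) + (π / 2 - k)) := by
        rw [integral_add intervalIntegrable_sin ((hinv.add intervalIntegrable_const).const_mul _),
          integral_const_mul, integral_add hinv intervalIntegrable_const, integral_sin,
          integral_one_div_of_pos hk (by linarith [pi_pos]), integral_const, cos_pi_div_two,
          smul_eq_mul, mul_one]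
        ring

theorem le_integral_ellipseSpeed (hk : 0 < k) (hk' : k ≤ π / 2) :
    cos k + k ^ 2 / 2 * (log (π / 2 / k) - cos k - k * (π ^ 2 / 4 * (k⁻¹ - (π / 2)⁻¹)))
      ≤ ∫ t in k..π / 2, ellipseSpeed k t := by
  have hne : ∀ t ∈ Set.uIcc k (π / 2), t ≠ 0 := fun t ht ↦ by
    rw [Set.uIcc_of_le hk'] at ht; exact (hk.trans_le ht.1).ne'
  have hinv : IntervalIntegrable (fun t : ℝ ↦ 1 / t) MeasureTheory.volume k (π / 2) :=
    intervalIntegrable_one_div hne continuousOn_id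
  have hinvsq : IntervalIntegrable (fun t : ℝ ↦ (t ^ 2)⁻¹) MeasureTheory.volume k (π / 2) :=
    intervalIntegrable_inv (fun t ht ↦ pow_ne_zero 2 (hne t ht)) (by fun_prop)
  have hint := ((hinv.sub intervalIntegrable_sin).sub ((hinvsq.const_mul (π ^ 2 / 4)).const_mul k))
  calc cos k + k ^ 2 / 2 * (log (π / 2 / k) - cos k - k * (π ^ 2 / 4 * (k⁻¹ - (π / 2)⁻¹)))
      = ∫ t in k..π / 2, (sin t + k ^ 2 / 2 * (1 / t - sin t - k * (π ^ 2 / 4 * (t ^ 2)⁻¹))) := by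
        rw [integral_add intervalIntegrable_sin (hint.const_mul _), integral_const_mul,
          integral_sub (hinv.sub intervalIntegrable_sin) ((hinvsq.const_mul _).const_mul _),
          integral_sub hinv intervalIntegrable_sin, integral_const_mul, integral_const_mul,
          integral_sin, integral_one_div_of_pos hk (by linarith [pi_pos]),
          integral_inv_sq_of_pos hk (by linarith [pi_pos]), cos_pi_div_two]
        ring
    _ ≤ ∫ t in k..π / 2, ellipseSpeed k t :=
        integral_mono_on hk' (intervalIntegrable_sin.add (hint.const_mul _))
          ((continuous_ellipseSpeed k).intervalIntegrable _ _)
          fun t ht ↦ le_ellipseSpeed hk (hk.trans_le ht.1) ht.2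

theorem abs_integral_ellipseSpeed_quarter_sub_le (hk : 0 < k) (hk' : k ≤ π / 2) :
    |(∫ t in 0..π / 2, ellipseSpeed k t) - (1 + k ^ 2 / 2 * log (1 / k))| ≤ 4 * k ^ 2 := by
  have hint := (continuous_ellipseSpeed k).intervalIntegrable (μ := MeasureTheory.volume)
  have hnear_nonneg : 0 ≤ ∫ t in 0..k, ellipseSpeed k t :=
    integral_nonneg hk.le fun t _ ↦ sqrt_nonneg _
  have hnear_le : ∫ t in 0..k, ellipseSpeed k t ≤ √2 * (k * k) := by
    simpa using integral_mono_on hk.le (hint 0 k) intervalIntegrable_const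
      fun t ht ↦ ellipseSpeed_le_sqrt_two_mul hk.le ht.1 ht.2
  have hupper := integral_ellipseSpeed_le hk hk'
  have hlower := le_integral_ellipseSpeed hk hk'
  have hlog : log (π / 2 / k) = log (π / 2) + log (1 / k) := by
    rw [div_eq_mul_one_div (π / 2), log_mul (by positivity) (by positivity)]
  have hlog_nonneg : 0 ≤ log (π / 2) := log_nonneg (by linarith [pi_gt_three])
  have hlog_le : log (π / 2) ≤ π / 2 - 1 := log_le_sub_one_of_pos (by positivity)
  have hcos_le : cos k ≤ 1 := cos_le_one k
  have hcos_ge : 1 - k ^ 2 / 2 ≤ cos k := one_sub_sq_div_two_le_cos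
  have hsqrt : √2 ≤ 3 / 2 := sqrt_le_iff.mpr ⟨by norm_num, by norm_num⟩
  have hpi := pi_lt_d2
  have htail : k * (π ^ 2 / 4 * (k⁻¹ - (π / 2)⁻¹)) ≤ 5 / 2 := by
    have : k * k⁻¹ = 1 := mul_inv_cancel₀ hk.ne'
    have : 0 ≤ k * (π ^ 2 / 4 * (π / 2)⁻¹) := by positivity
    nlinarith [pi_pos]
  rw [hlog] at hupper hlower
  rw [← integral_add_adjacent_intervals (hint 0 k) (hint k (π / 2)), abs_le]
  constructor <;> nlinarith [mul_nonneg (sq_nonneg k) hlog_nonneg, sq_nonneg k,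
    mul_le_mul_of_nonneg_left hlog_le (sq_nonneg k), mul_le_mul_of_nonneg_left htail (sq_nonneg k),
    mul_le_mul_of_nonneg_left hsqrt (sq_nonneg k), mul_le_mul_of_nonneg_left hcos_le (sq_nonneg k)]

end Integrals

theorem abs_integral_ellipseSpeed_sub_le {k : ℝ} (hk : 0 < k) (hk' : k ≤ π / 2) :
    |(∫ t in 0..2 * π, ellipseSpeed k t) - (4 + 2 * k ^ 2 * log (1 / k))| ≤ 16 * k ^ 2 := by
  rw [integral_zero_two_pi_eq_four_mul_of_symm (continuous_ellipseSpeed k)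
    (ellipseSpeed_periodic k) (ellipseSpeed_pi_sub k)]
  calc |4 * (∫ t in 0..π / 2, ellipseSpeed k t) - (4 + 2 * k ^ 2 * log (1 / k))|
      = |4 * ((∫ t in 0..π / 2, ellipseSpeed k t) - (1 + k ^ 2 / 2 * log (1 / k)))| := by ring_nf
    _ = 4 * |(∫ t in 0..π / 2, ellipseSpeed k t) - (1 + k ^ 2 / 2 * log (1 / k))| := by
        rw [abs_mul, abs_of_pos four_pos]
    _ ≤ 16 * k ^ 2 := by linarith [abs_integral_ellipseSpeed_quarter_sub_le hk hk']

/-- The perimeter `per k = ∫₀^{2π} √(sin²t + k² cos²t) dt` of the ellipse with semi-axes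
`1` and `k` satisfies `per k = 4 + 2k² log(1/k) + O(k²)` as `k → 0⁺`; in particular, for
every `C > 0` there is `k₀ > 0` with `per k ≥ 4 + k² log(1/k)` for all `0 < k < k₀`. -/
theorem stmt18 :
    (∃ C > (0 : ℝ), ∃ k₁ > (0 : ℝ), ∀ k : ℝ, 0 < k → k < k₁ →
      |(∫ t in (0 : ℝ)..(2 * π), Real.sqrt (Real.sin t ^ 2 + k ^ 2 * Real.cos t ^ 2)) -
        (4 + 2 * k ^ 2 * Real.log (1 / k))| ≤ C * k ^ 2) ∧
    (∀ C > (0 : ℝ), ∃ k₀ > (0 : ℝ), ∀ k : ℝ, 0 < k → k < k₀ →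
      4 + k ^ 2 * Real.log (1 / k) ≤
        ∫ t in (0 : ℝ)..(2 * π), Real.sqrt (Real.sin t ^ 2 + k ^ 2 * Real.cos t ^ 2)) := by
  have hpi := pi_gt_three
  refine ⟨⟨16, by norm_num, 1, one_pos, fun k hk hk₁ ↦
    abs_integral_ellipseSpeed_sub_le hk (by linarith)⟩, fun _ _ ↦ ?_⟩
  refine ⟨min 1 (exp (-16)), lt_min one_pos (exp_pos _), fun k hk hk₀ ↦ ?_⟩
  have hlog : 16 ≤ log (1 / k) := by
    have := log_lt_log hk (hk₀.trans_le (min_le_right _ _))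
    rw [log_exp] at this
    rw [one_div, log_inv]
    linarith
  have hbound := abs_le.mp
    (abs_integral_ellipseSpeed_sub_le hk (by linarith [hk₀.trans_le (min_le_left _ _)]))
  change _ ≤ ∫ t in 0..2 * π, ellipseSpeed k t
  nlinarith [hbound.1, mul_le_mul_of_nonneg_left hlog (sq_nonneg k)]
end

section
/- Let K be the lens formed as the intersection of two closed disks of equal radius, symmetric about the x-axis, with the two corner points a and b on the x-axis, and suppose the lens is thin enough that the angle of each circular arc at its endpoints with segment ab is less than 30°. Let m be the midpoint of the upper arc. Then for any three points p, q, r on ∂K listed in order of increasing x-coordinate, |pq| + |qr| ≤ |am| + |mb|. -/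
/-!
Put the corners at `a = (-c, 0)`, `b = (c, 0)` and the centres at `(0, ±d)`. The thinness
condition reads `3 c² < d²`: near each corner the lens lies in a wedge of half-angle below `30°`,
so for `p, q` in the wedge at `a` with `p` to the left of `q` the angle `∠qap` is below `60°` and
`|pq| ≤ |aq|`; symmetrically `|qr| ≤ |qb|`. Finally the whole lens lies inside the ellipse
with foci `a`, `b` through `m`, so `|aq| + |qb| ≤ |am| + |mb|`.
-/

open Metric EuclideanGeometry Real

local notation "ℝ²" => EuclideanSpace ℝ (Fin 2)

lemma sqrt_add_sqrt_le_two_mul_sqrt_s19 {X Y Z W : ℝ} (hX : 0 ≤ X) (hY : 0 ≤ Y) (hW : 0 ≤ W)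
    (hXY : X * Y ≤ W ^ 2) (hsum : X + Y + 2 * W ≤ 4 * Z) :
    √X + √Y ≤ 2 * √Z := by
  have hprod : √X * √Y ≤ W := by
    rw [← Real.sqrt_mul hX, ← Real.sqrt_sq hW]
    exact Real.sqrt_le_sqrt hXY
  have hZ : 0 ≤ Z := by linarith
  rw [show 2 * √Z = √(4 * Z) by rw [Real.sqrt_mul' _ hZ]; norm_num,
    Real.le_sqrt (by positivity) (by linarith)]
  nlinarith [Real.sq_sqrt hX, Real.sq_sqrt hY]

/-- `3 c² ≤ d²` says that the wedge `d |y| ≤ c x` has half-angle at most `30°`. -/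
lemma sq_dist_le_of_mem_wedge {c d x₁ y₁ x₂ y₂ : ℝ} (hd : 0 < d) (hcd : 3 * c ^ 2 ≤ d ^ 2)
    (h₁ : d * |y₁| ≤ c * x₁) (h₂ : d * |y₂| ≤ c * x₂) (hx₁ : 0 ≤ x₁) (hx : x₁ ≤ x₂) :
    (x₂ - x₁) ^ 2 + (y₂ - y₁) ^ 2 ≤ x₂ ^ 2 + y₂ ^ 2 := by
  have hprod : d ^ 2 * (y₁ ^ 2 + 2 * (|y₁| * |y₂|)) ≤ c ^ 2 * (x₁ ^ 2 + 2 * (x₁ * x₂)) := by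
    have h₁₁ := mul_le_mul h₁ h₁ (by positivity) (le_trans (by positivity) h₁)
    have h₁₂ := mul_le_mul h₁ h₂ (by positivity) (le_trans (by positivity) h₁)
    nlinarith [sq_abs y₁]
  have hy : y₁ ^ 2 + 2 * (|y₁| * |y₂|) ≤ 2 * (x₁ * x₂) - x₁ ^ 2 := by
    have : d ^ 2 * (y₁ ^ 2 + 2 * (|y₁| * |y₂|)) ≤ d ^ 2 * (2 * (x₁ * x₂) - x₁ ^ 2) := by
      nlinarith [mul_nonneg hx₁ (sub_nonneg.2 hx)]
    exact le_of_mul_le_mul_left this (by positivity)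
  nlinarith [neg_abs_le (y₁ * y₂), abs_mul y₁ y₂]

lemma sqrt_add_sqrt_le_of_lens {c d e x y : ℝ} (hd : 0 ≤ d) (he : 0 ≤ e)
    (hce : c ^ 2 = e ^ 2 + 2 * e * d) (h : x ^ 2 + y ^ 2 + 2 * d * |y| ≤ c ^ 2) :
    √((x + c) ^ 2 + y ^ 2) + √((x - c) ^ 2 + y ^ 2) ≤ 2 * √(c ^ 2 + e ^ 2) := by
  have hy : |y| ≤ e := by nlinarith [sq_abs y, abs_nonneg y]
  refine sqrt_add_sqrt_le_two_mul_sqrt_s19 (by positivity) (by positivity)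
    (W := c ^ 2 + 2 * e ^ 2 - x ^ 2 - y ^ 2) (by nlinarith [abs_nonneg y]) ?_ (by linarith)
  nlinarith [sq_abs y, mul_nonneg (sub_nonneg.2 hy)
    (by positivity : 0 ≤ e ^ 2 * (|y| + e) + 2 * e * d * |y|)]

lemma dist_sq_fin_two (x y : ℝ²) : dist x y ^ 2 = (x 0 - y 0) ^ 2 + (x 1 - y 1) ^ 2 := by
  rw [EuclideanSpace.dist_eq, Real.sq_sqrt (by positivity)]
  simp [Fin.sum_univ_two, Real.dist_eq, sq_abs]

lemma sq_add_sq_of_mem_sphere {x y : ℝ²} {R : ℝ} (h : x ∈ sphere y R) :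
    (x 0 - y 0) ^ 2 + (x 1 - y 1) ^ 2 = R ^ 2 := by
  rw [← dist_sq_fin_two, Metric.mem_sphere.1 h]

lemma dist_eq_sqrt_fin_two (x y : ℝ²) : dist x y = √((x 0 - y 0) ^ 2 + (x 1 - y 1) ^ 2) := by
  rw [← dist_sq_fin_two, Real.sqrt_sq dist_nonneg]

lemma cos_angle_of_horizontal {o a b : ℝ²} (h₁ : a 1 = b 1) (h₀ : a 0 < b 0) :
    cos (∠ o a b) = (o 0 - a 0) / dist o a := by
  have hinner : inner ℝ (o -ᵥ a) (b -ᵥ a) = (o 0 - a 0) * (b 0 - a 0) := by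
    simp [EuclideanSpace.inner_eq_star_dotProduct, Fin.sum_univ_two, dotProduct, h₁]; ring
  have hnorm : ‖b -ᵥ a‖ = b 0 - a 0 := by
    rw [← dist_eq_norm_vsub, dist_eq_sqrt_fin_two, h₁, sub_self, sq, sq, mul_zero, add_zero,
      Real.sqrt_mul_self (by linarith)]
  rw [angle, InnerProductGeometry.cos_angle, hinner, hnorm, ← dist_eq_norm_vsub]
  field_simp [(sub_pos.2 h₀).ne']

lemma two_mul_lt_dist_of_pi_div_three_lt_angle {o a b : ℝ²} (hoa : o ≠ a) (h₁ : a 1 = b 1)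
    (h₀ : a 0 < b 0) (h : π / 3 < ∠ o a b) : 2 * (o 0 - a 0) < dist o a := by
  have hcos : cos (∠ o a b) < cos (π / 3) :=
    cos_lt_cos_of_nonneg_of_le_pi (by positivity) (angle_le_pi _ _ _) h
  rw [cos_angle_of_horizontal h₁ h₀, cos_pi_div_three, div_lt_iff₀ (dist_pos.2 hoa)] at hcos
  linarith

/-- The lens `closedBall (0, d) R ∩ closedBall (0, -d) R` with `R² = c² + d²`, whose corners
are `(±c, 0)`. -/
def lens (c d : ℝ) : Set ℝ² := {x | x 0 ^ 2 + x 1 ^ 2 + 2 * d * |x 1| ≤ c ^ 2}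

lemma mem_lens_of_mem_closedBall {c d R : ℝ} {o₁ o₂ x : ℝ²} (hR : c ^ 2 + d ^ 2 = R ^ 2)
    (ho₁₀ : o₁ 0 = 0) (ho₁₁ : o₁ 1 = d) (ho₂₀ : o₂ 0 = 0) (ho₂₁ : o₂ 1 = -d)
    (h₁ : x ∈ closedBall o₁ R) (h₂ : x ∈ closedBall o₂ R) : x ∈ lens c d := by
  have hsq : ∀ o, x ∈ closedBall o R → (x 0 - o 0) ^ 2 + (x 1 - o 1) ^ 2 ≤ R ^ 2 := fun o ho ↦
    dist_sq_fin_two x o ▸ pow_le_pow_left₀ dist_nonneg ho 2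
  have h₁' := hsq o₁ h₁
  have h₂' := hsq o₂ h₂
  rw [ho₁₀, ho₁₁] at h₁'
  rw [ho₂₀, ho₂₁] at h₂'
  show x 0 ^ 2 + x 1 ^ 2 + 2 * d * |x 1| ≤ c ^ 2
  rcases abs_cases (x 1) with ⟨h, _⟩ | ⟨h, _⟩ <;> rw [h] <;> nlinarith

lemma abs_le_of_mem_lens {c d : ℝ} {x : ℝ²} (hc : 0 ≤ c) (hd : 0 ≤ d) (hx : x ∈ lens c d) :
    |x 0| ≤ c := by
  have hx' : x 0 ^ 2 + x 1 ^ 2 + 2 * d * |x 1| ≤ c ^ 2 := hx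
  exact abs_le_of_sq_le_sq (by nlinarith [abs_nonneg (x 1)]) hc

/-- Near each corner the lens lies in a wedge whose edges are the tangents of the arcs. -/
lemma mul_abs_le_of_mem_lens {c d : ℝ} {x : ℝ²} (hc : 0 ≤ c) (hd : 0 ≤ d) (hx : x ∈ lens c d) :
    d * |x 1| ≤ c * (c + x 0) ∧ d * |x 1| ≤ c * (c - x 0) := by
  have hx' : x 0 ^ 2 + x 1 ^ 2 + 2 * d * |x 1| ≤ c ^ 2 := hx
  have h₀ := abs_le.1 (abs_le_of_mem_lens hc hd hx)
  constructor <;> nlinarith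

section LensDistances

variable {c d : ℝ} {a b p q r : ℝ²}

lemma dist_le_dist_of_mem_lens_left (hc : 0 ≤ c) (hd : 0 < d) (hcd : 3 * c ^ 2 ≤ d ^ 2)
    (ha₀ : a 0 = -c) (ha₁ : a 1 = 0) (hp : p ∈ lens c d) (hq : q ∈ lens c d)
    (hpq : p 0 ≤ q 0) : dist p q ≤ dist a q := by
  have hp' := (mul_abs_le_of_mem_lens hc hd.le hp).1
  have hq' := (mul_abs_le_of_mem_lens hc hd.le hq).1
  have hp₀ := (abs_le.1 (abs_le_of_mem_lens hc hd.le hp)).1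
  have := sq_dist_le_of_mem_wedge hd hcd hp' hq' (by linarith) (by linarith)
  rw [← pow_le_pow_iff_left₀ dist_nonneg dist_nonneg two_ne_zero, dist_sq_fin_two,
    dist_sq_fin_two, ha₀, ha₁]
  linear_combination this

lemma dist_le_dist_of_mem_lens_right (hc : 0 ≤ c) (hd : 0 < d) (hcd : 3 * c ^ 2 ≤ d ^ 2)
    (hb₀ : b 0 = c) (hb₁ : b 1 = 0) (hq : q ∈ lens c d) (hr : r ∈ lens c d)
    (hqr : q 0 ≤ r 0) : dist q r ≤ dist q b := by
  have hr' := (mul_abs_le_of_mem_lens hc hd.le hr).2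
  have hq' := (mul_abs_le_of_mem_lens hc hd.le hq).2
  have hr₀ := (abs_le.1 (abs_le_of_mem_lens hc hd.le hr)).2
  have := sq_dist_le_of_mem_wedge hd hcd hr' hq' (by linarith) (by linarith)
  rw [← pow_le_pow_iff_left₀ dist_nonneg dist_nonneg two_ne_zero, dist_sq_fin_two,
    dist_sq_fin_two, hb₀, hb₁]
  linear_combination this

/-- The lens lies inside the ellipse with foci `a`, `b` through the top `m = (0, e)` of the
upper arc. -/
lemma dist_add_dist_le_of_mem_lens {e : ℝ} {m : ℝ²} (hd : 0 ≤ d) (he : 0 ≤ e)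
    (hce : c ^ 2 = e ^ 2 + 2 * e * d) (ha₀ : a 0 = -c) (ha₁ : a 1 = 0) (hb₀ : b 0 = c)
    (hb₁ : b 1 = 0) (hm₀ : m 0 = 0) (hm₁ : m 1 = e) (hq : q ∈ lens c d) :
    dist a q + dist q b ≤ dist a m + dist m b := by
  have := sqrt_add_sqrt_le_of_lens hd he hce hq
  simp only [dist_eq_sqrt_fin_two, ha₀, ha₁, hb₀, hb₁, hm₀, hm₁]
  convert this using 2 <;> ring_nf

end LensDistances

theorem stmt19_general (R : ℝ) (o₁ o₂ : EuclideanSpace ℝ (Fin 2))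
    (ho₁x : o₁ 0 = 0) (ho₂x : o₂ 0 = 0) (hsym : o₁ 1 = -(o₂ 1)) (ho₁up : 0 < o₁ 1)
    (K : Set (EuclideanSpace ℝ (Fin 2))) (hK : K = closedBall o₁ R ∩ closedBall o₂ R)
    (a b : EuclideanSpace ℝ (Fin 2))
    (ha₁ : a ∈ sphere o₁ R) (ha₂ : a ∈ sphere o₂ R) (hay : a 1 = 0)
    (hb₁ : b ∈ sphere o₁ R) (hby : b 1 = 0)
    (hab : a 0 < b 0)
    (hthin₁ : π / 3 < ∠ o₂ a b)
    (m : EuclideanSpace ℝ (Fin 2)) (hm : m ∈ sphere o₂ R) (hmx : m 0 = 0)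
    (hmy : 0 < m 1)
    (p q r : EuclideanSpace ℝ (Fin 2))
    (hp : p ∈ frontier K) (hq : q ∈ frontier K) (hr : r ∈ frontier K)
    (hpq : p 0 ≤ q 0) (hqr : q 0 ≤ r 0) :
    dist p q + dist q r ≤ dist a m + dist m b := by
  obtain ⟨c, hbx⟩ : ∃ c, b 0 = c := ⟨_, rfl⟩
  obtain ⟨d, ho₁y⟩ : ∃ d, o₁ 1 = d := ⟨_, rfl⟩
  have ho₂y : o₂ 1 = -d := by linarith
  have hb := sq_add_sq_of_mem_sphere hb₁
  have ha := sq_add_sq_of_mem_sphere ha₁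
  have hm' := sq_add_sq_of_mem_sphere hm
  rw [hbx, hby, ho₁x, ho₁y] at hb
  rw [hay, ho₁x, ho₁y] at ha
  rw [hmx, ho₂x, ho₂y] at hm'
  have hax : a 0 = -c := (sq_eq_sq_iff_eq_or_eq_neg.1 (by linear_combination ha - hb)).resolve_left
    (hbx ▸ hab.ne)
  have hc : 0 < c := by linarith
  have hce : c ^ 2 = m 1 ^ 2 + 2 * m 1 * d := by linear_combination hb - hm'
  have hd : 0 < d := ho₁y ▸ ho₁up
  have hcd : 3 * c ^ 2 ≤ d ^ 2 := by
    have hoa : o₂ ≠ a := fun h ↦ by rw [h, hay] at ho₂y; linarith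
    have := two_mul_lt_dist_of_pi_div_three_lt_angle hoa (hay.trans hby.symm) (hbx ▸ hab) hthin₁
    rw [dist_comm, show dist a o₂ = R from ha₂, ho₂x, hax] at this
    nlinarith
  have hKclosed : IsClosed K := hK ▸ isClosed_closedBall.inter isClosed_closedBall
  have hlens : frontier K ⊆ lens c d := by
    refine hKclosed.frontier_subset.trans ?_
    rw [hK]
    exact fun x hx ↦ mem_lens_of_mem_closedBall (by linear_combination hb) ho₁x ho₁y ho₂x ho₂y
      hx.1 hx.2
  calc dist p q + dist q r ≤ dist a q + dist q b :=
        add_le_add (dist_le_dist_of_mem_lens_left hc.le hd hcd hax hay (hlens hp) (hlens hq) hpq)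
          (dist_le_dist_of_mem_lens_right hc.le hd hcd hbx hby (hlens hq) (hlens hr) hqr)
    _ ≤ dist a m + dist m b :=
        dist_add_dist_le_of_mem_lens hd.le hmy.le hce hax hay hbx hby hmx rfl (hlens hq)

/-- Let `K` be the lens formed as the intersection of two closed disks of equal radius
`R`, with centers `o₁` (upper) and `o₂` (lower) symmetric about the `x`-axis, whose
boundary circles meet at the two points `a`, `b` on the `x`-axis. Suppose the lens is
thin enough that the angle of each arc at its endpoints with the chord `ab` is less than
`30°` (equivalently, each angle between a radius to an endpoint and the chord exceeds
`60°`). Let `m` be the midpoint of the upper arc (the topmost point, on the circle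
centered at `o₂`). Then for any three points `p, q, r` on `∂K`, listed in order of
increasing `x`-coordinate, `|pq| + |qr| ≤ |am| + |mb|`. -/
theorem stmt19 (R : ℝ) (hR : 0 < R) (o₁ o₂ : EuclideanSpace ℝ (Fin 2))
    (ho₁x : o₁ 0 = 0) (ho₂x : o₂ 0 = 0) (hsym : o₁ 1 = -(o₂ 1)) (ho₁up : 0 < o₁ 1)
    (K : Set (EuclideanSpace ℝ (Fin 2))) (hK : K = closedBall o₁ R ∩ closedBall o₂ R)
    (a b : EuclideanSpace ℝ (Fin 2))
    (ha₁ : a ∈ sphere o₁ R) (ha₂ : a ∈ sphere o₂ R) (hay : a 1 = 0)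
    (hb₁ : b ∈ sphere o₁ R) (hb₂ : b ∈ sphere o₂ R) (hby : b 1 = 0)
    (hab : a 0 < b 0)
    (hthin₁ : π / 3 < ∠ o₂ a b) (hthin₂ : π / 3 < ∠ o₂ b a)
    (hthin₃ : π / 3 < ∠ o₁ a b) (hthin₄ : π / 3 < ∠ o₁ b a)
    (m : EuclideanSpace ℝ (Fin 2)) (hm : m ∈ sphere o₂ R) (hmx : m 0 = 0)
    (hmy : 0 < m 1)
    (p q r : EuclideanSpace ℝ (Fin 2))
    (hp : p ∈ frontier K) (hq : q ∈ frontier K) (hr : r ∈ frontier K)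
    (hpq : p 0 ≤ q 0) (hqr : q 0 ≤ r 0) :
    dist p q + dist q r ≤ dist a m + dist m b :=
  stmt19_general R o₁ o₂ ho₁x ho₂x hsym ho₁up K hK a b ha₁ ha₂ hay hb₁ hby hab hthin₁ m hm hmx hmy p
    q r hp hq hr hpq hqr
end
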